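/- arXiv:2003.11992 — 18 statements merged into one kernel-verified Lean document; each statement's English description precedes it below -/
import Mathlib

section
/- If A is a point of the plane, r > 0, and B, C, D, E are points with dist A B = dist A C = dist A D = dist A E = r, dist B C = dist C D = dist D E = r, D ≠ B and E ≠ C, then A is the midpoint of B and E (equivalently E = 2A − B, so B, A, E are collinear and dist B E = 2r). -/
/-!
In the plane, two circles of radius `r` whose centres `A` and `C` are at distance `r` meet in
at most two points. One is `B`, the other is `A + (C - B)`: it lies at distance `‖C - B‖ = r`
from `A` and `‖A - B‖ = r` from `C`, and it is not `B` since `‖C - A‖ ≠ 2r`. So each compass step `B ↦ C ↦ D` with `D ≠ B` obeys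
`D - A = (C - A) - (B - A)`, and two such steps give `E - A = (D - A) - (C - A) = -(B - A)`.
-/

open EuclideanGeometry Module

variable {V P : Type*} [NormedAddCommGroup V] [InnerProductSpace ℝ V] [MetricSpace P]
  [NormedAddTorsor V P] [FiniteDimensional ℝ V]

theorem eq_vsub_vadd_of_dist_eq_of_finrank_eq_two (hd : finrank ℝ V = 2) {A B C D : P} {r : ℝ}
    (hAB : dist A B = r) (hAC : dist A C = r) (hAD : dist A D = r)
    (hBC : dist B C = r) (hCD : dist C D = r) (hDB : D ≠ B) :
    D = (C -ᵥ B) +ᵥ A := by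
  have hr : r ≠ 0 := by
    rintro rfl
    rw [dist_eq_zero] at hAB hAD
    exact hDB (hAD.symm.trans hAB)
  have hA : dist ((C -ᵥ B) +ᵥ A) A = r := by
    rw [dist_vadd_left, ← dist_eq_norm_vsub, dist_comm, hBC]
  have hC : dist ((C -ᵥ B) +ᵥ A) C = r := by
    rw [vsub_vadd_comm, dist_vadd_left, ← dist_eq_norm_vsub, hAB]
  have hB : B ≠ (C -ᵥ B) +ᵥ A := by
    intro h
    have hBA : C -ᵥ B = B -ᵥ A := (eq_vadd_iff_vsub_eq _ _ _).mp h |>.symm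
    have : r = 2 * r := by
      calc r = ‖C -ᵥ A‖ := by rw [← dist_eq_norm_vsub, dist_comm, hAC]
        _ = ‖(2 : ℝ) • (B -ᵥ A)‖ := by rw [← vsub_add_vsub_cancel C B A, hBA, two_smul]
        _ = 2 * r := by rw [norm_smul, ← dist_eq_norm_vsub, dist_comm, hAB, Real.norm_two]
    exact hr (by linarith)
  have hAC' : A ≠ C := fun h ↦ hr (by rw [← hAC, h, dist_self])
  refine (eq_of_dist_eq_of_dist_eq_of_finrank_eq_two hd hAC' hB ?_ hA ?_ hBC hC ?_).resolve_left
    hDB <;> rwa [dist_comm]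

theorem mohr_corollary_prop2_general (A B C D E : EuclideanSpace ℝ (Fin 2)) (r : ℝ)
    (hAB : dist A B = r) (hAC : dist A C = r) (hAD : dist A D = r) (hAE : dist A E = r)
    (hBC : dist B C = r) (hCD : dist C D = r) (hDE : dist D E = r)
    (hDB : D ≠ B) (hEC : E ≠ C) :
    A = midpoint ℝ B E := by
  have hd : finrank ℝ (EuclideanSpace ℝ (Fin 2)) = 2 := finrank_euclideanSpace_fin
  have hD := eq_vsub_vadd_of_dist_eq_of_finrank_eq_two hd hAB hAC hAD hBC hCD hDB
  have hE := eq_vsub_vadd_of_dist_eq_of_finrank_eq_two hd hAC hAD hAE hCD hDE hEC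
  rw [eq_comm, midpoint_eq_iff, AffineEquiv.pointReflection_apply, hE, hD, vadd_vsub_assoc,
    add_comm, vsub_add_vsub_cancel]

/-- Mohr, *Euclides Danicus*, First Part, Corollary to Proposition 2: stepping the
compass three times with opening `r` around the circle of center `A` and radius `r`,
starting from `B`, reaches the point `E` diametrically opposite to `B`; that is,
`A` is the midpoint of `B` and `E`. -/
theorem mohr_corollary_prop2 (A B C D E : EuclideanSpace ℝ (Fin 2)) (r : ℝ) (hr : 0 < r)
    (hAB : dist A B = r) (hAC : dist A C = r) (hAD : dist A D = r) (hAE : dist A E = r)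
    (hBC : dist B C = r) (hCD : dist C D = r) (hDE : dist D E = r)
    (hDB : D ≠ B) (hEC : E ≠ C) :
    A = midpoint ℝ B E :=
  mohr_corollary_prop2_general A B C D E r hAB hAC hAD hAE hBC hCD hDE hDB hEC
end

section
/- Let A ≠ B be points of the plane and r = dist A B. Let E be the point such that A is the midpoint of B and E (E = 2A − B). Let F be a point with dist B F = 2r and dist E F = r, and let L be a point with dist B L = r and dist E L = dist F A. Then dist A L = r/2. -/
open EuclideanGeometry

theorem two_mul_dist_sq_eq_of_eq_midpoint {V P : Type*} [NormedAddCommGroup V]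
    [InnerProductSpace ℝ V] [MetricSpace P] [NormedAddTorsor V P] {A B E : P}
    (hA : A = midpoint ℝ B E) (X : P) :
    2 * dist X A ^ 2 = dist X B ^ 2 + dist X E ^ 2 - 2 * dist A B ^ 2 := by
  have hBE : dist B E = 2 * dist A B := by
    rw [hA, dist_midpoint_left, Real.norm_two]
    ring
  rw [dist_sq_add_dist_sq_eq_two_mul_dist_midpoint_sq_add_half_dist_sq, ← hA, hBE]
  ring

theorem mohr_prop15_midpoint_general (A B E F L : EuclideanSpace ℝ (Fin 2)) (r : ℝ)
    (hr : r = dist A B)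
    (hE : A = midpoint ℝ B E)
    (hBF : dist B F = 2 * r) (hEF : dist E F = r)
    (hBL : dist B L = r) (hEL : dist E L = dist F A) :
    dist A L = r / 2 := by
  have hFA : 2 * dist F A ^ 2 = 3 * r ^ 2 := by
    rw [two_mul_dist_sq_eq_of_eq_midpoint hE, dist_comm F B, dist_comm F E, hBF, hEF, ← hr]
    ring
  have hLA : dist L A ^ 2 = (r / 2) ^ 2 := by
    have h := two_mul_dist_sq_eq_of_eq_midpoint hE L
    rw [dist_comm L B, dist_comm L E, hBL, hEL, ← hr] at h
    linarith
  have hr0 : 0 ≤ r := hr ▸ dist_nonneg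
  rw [dist_comm]
  exact (pow_left_inj₀ dist_nonneg (by positivity) two_ne_zero).mp hLA

/-- Mohr, *Euclides Danicus*, First Part, Proposition 15 (second construction):
with `E` diametrically opposite `B` on the circle of center `A` and radius
`r = dist A B`, `F` a point with `dist B F = 2r` and `dist E F = r`, and `L` a point
with `dist B L = r` and `dist E L = dist F A`, the point `L` is at distance `r / 2`
from `A`. -/
theorem mohr_prop15_midpoint (A B E F L : EuclideanSpace ℝ (Fin 2)) (r : ℝ)
    (hAB : A ≠ B) (hr : r = dist A B)
    (hE : A = midpoint ℝ B E)
    (hBF : dist B F = 2 * r) (hEF : dist E F = r)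
    (hBL : dist B L = r) (hEL : dist E L = dist F A) :
    dist A L = r / 2 :=
  mohr_prop15_midpoint_general A B E F L r hr hE hBF hEF hBL hEL
end

section
/- Let B ≠ C be points of the plane and A a point not on the line through B and C. Let D ≠ A be a point with dist B D = dist B A and dist C D = dist C A. Then the midpoint F of A and D lies on the line through B and C, and the segment AF is perpendicular to BC, i.e. the inner product ⟨D − A, C − B⟩ = 0. In particular F is the foot of the perpendicular dropped from A onto the line BC. -/
/-!
`B` and `C` are equidistant from `A` and `D`, so both lie on the perpendicular bisector of `AD`.
Since `A ≠ D`, in the plane that bisector is a line, hence it is the line `BC`; it contains the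
midpoint of `AD`, and its direction is orthogonal to `D - A`.
-/

open scoped RealInnerProductSpace

open Module AffineSubspace

namespace EuclideanGeometry

variable {V P : Type*} [NormedAddCommGroup V] [InnerProductSpace ℝ V] [MetricSpace P]
  [NormedAddTorsor V P]

theorem perpBisector_eq_affineSpan_pair [Fact (finrank ℝ V = 2)] {p₁ p₂ c₁ c₂ : P}
    (hp : p₁ ≠ p₂) (hc : c₁ ≠ c₂) (hc₁ : c₁ ∈ perpBisector p₁ p₂)
    (hc₂ : c₂ ∈ perpBisector p₁ p₂) : perpBisector p₁ p₂ = line[ℝ, c₁, c₂] := by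
  have hdir : (line[ℝ, c₁, c₂]).direction = (perpBisector p₁ p₂).direction := by
    rw [direction_affineSpan, vectorSpan_pair, direction_perpBisector]
    exact (eq_span_singleton_of_mem_of_finrank_eq_one
      (Submodule.finrank_orthogonal_span_singleton (vsub_ne_zero.2 hp.symm))
      (direction_perpBisector p₁ p₂ ▸ vsub_mem_direction hc₁ hc₂) (vsub_ne_zero.2 hc)).symm
  exact (eq_of_direction_eq_of_nonempty_of_le hdir
    ((Set.insert_nonempty _ _).affineSpan ℝ) (affineSpan_pair_le_of_mem_of_mem hc₁ hc₂)).symm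

end EuclideanGeometry

open EuclideanGeometry

theorem mohr_prop19_perpendicular_foot_general (A B C D : EuclideanSpace ℝ (Fin 2))
    (hBC : B ≠ C)
    (hDA : D ≠ A) (hBD : dist B D = dist B A) (hCD : dist C D = dist C A) :
    midpoint ℝ A D ∈ affineSpan ℝ ({B, C} : Set (EuclideanSpace ℝ (Fin 2))) ∧
      ⟪D - A, C - B⟫ = 0 := by
  have : Fact (finrank ℝ (EuclideanSpace ℝ (Fin 2)) = 2) := ⟨finrank_euclideanSpace_fin⟩
  have hB : B ∈ perpBisector A D := mem_perpBisector_iff_dist_eq.2 hBD.symm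
  have hC : C ∈ perpBisector A D := mem_perpBisector_iff_dist_eq.2 hCD.symm
  refine ⟨?_, ?_⟩
  · rw [← perpBisector_eq_affineSpan_pair hDA.symm hBC hB hC]
    exact midpoint_mem_perpBisector A D
  · rw [real_inner_comm]
    exact inner_vsub_vsub_of_dist_eq_of_dist_eq (mem_perpBisector_iff_dist_eq'.1 hB)
      (mem_perpBisector_iff_dist_eq'.1 hC)

/-- Mohr, *Euclides Danicus*, First Part, Proposition 19: if `D ≠ A` is the reflection
of `A` obtained by compass arcs centered at `B` and `C` (`dist B D = dist B A` and
`dist C D = dist C A`), then the midpoint `F` of `A` and `D` lies on the line `BC` and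
`AD` is perpendicular to `BC`; so `F` is the foot of the perpendicular from `A` to
the line `BC`. -/
theorem mohr_prop19_perpendicular_foot (A B C D : EuclideanSpace ℝ (Fin 2))
    (hBC : B ≠ C) (hA : A ∉ affineSpan ℝ ({B, C} : Set (EuclideanSpace ℝ (Fin 2))))
    (hDA : D ≠ A) (hBD : dist B D = dist B A) (hCD : dist C D = dist C A) :
    midpoint ℝ A D ∈ affineSpan ℝ ({B, C} : Set (EuclideanSpace ℝ (Fin 2))) ∧
      ⟪D - A, C - B⟫ = 0 :=
  mohr_prop19_perpendicular_foot_general A B C D hBC hDA hBD hCD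
end

section
/- Let D ≠ B be points of the plane, F the midpoint of D and B, and C a point strictly between D and B with C ≠ F. Let E be the point such that C is the midpoint of F and E, and let H be a point with dist F H = dist F B and dist E H = dist F B. Then (dist C H)² = (dist D C) · (dist C B). -/
/-!
`H` is equidistant from `F` and `E`, so it lies on the perpendicular bisector of `FE`, which
passes through the midpoint `C`; Pythagoras (in the form of Apollonius's theorem) gives
`CH² = FH² - FC² = FB² - FC²`. Since `C` lies on the diameter `DB` of the circle with centre `F`
and radius `FB`, the power of the point `C` gives `DC · CB = FB² - FC²`.
-/

open EuclideanGeometry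

variable {V P : Type*} [NormedAddCommGroup V] [InnerProductSpace ℝ V] [MetricSpace P]
  [NormedAddTorsor V P]

theorem dist_midpoint_sq_of_dist_eq {F E H : P} (h : dist F H = dist E H) :
    dist (midpoint ℝ F E) H ^ 2 = dist F H ^ 2 - dist F (midpoint ℝ F E) ^ 2 := by
  have apollonius := dist_sq_add_dist_sq_eq_two_mul_dist_midpoint_sq_add_half_dist_sq H F E
  rw [dist_comm H F, dist_comm H E, ← h, dist_comm H] at apollonius
  rw [dist_left_midpoint (𝕜 := ℝ), Real.norm_two]
  linarith

theorem Wbtw.dist_mul_dist_eq_sq_sub_sq {D C B : P} (h : Wbtw ℝ D C B) :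
    dist D C * dist C B = dist (midpoint ℝ D B) B ^ 2 - dist (midpoint ℝ D B) C ^ 2 := by
  have hDF : dist D (midpoint ℝ D B) = dist B (midpoint ℝ D B) :=
    dist_left_midpoint_eq_dist_right_midpoint D B
  have hCF : dist C (midpoint ℝ D B) ≤ dist B (midpoint ℝ D B) :=
    (h.dist_le_max_dist _).trans (by rw [hDF, max_self])
  rw [dist_comm C B, mul_dist_eq_abs_sub_sq_dist h.mem_affineSpan hDF, abs_of_nonneg
    (sub_nonneg.2 (pow_le_pow_left₀ dist_nonneg hCF 2)), dist_comm B, dist_comm C]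

theorem mohr_prop27_geometric_mean_general (D B C E F H : EuclideanSpace ℝ (Fin 2))
    (hF : F = midpoint ℝ D B)
    (hC : Sbtw ℝ D C B)
    (hE : C = midpoint ℝ F E)
    (hFH : dist F H = dist F B) (hEH : dist E H = dist F B) :
    (dist C H) ^ 2 = dist D C * dist C B := by
  subst hF hE
  rw [hC.wbtw.dist_mul_dist_eq_sq_sub_sq, dist_midpoint_sq_of_dist_eq (hFH.trans hEH.symm), hFH]

/-- Mohr, *Euclides Danicus*, First Part, Proposition 27: correctness of the
compass-only construction of the geometric mean of the two parts `DC`, `CB` of a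
segment `DB`: with `F` the midpoint of `D` and `B`, `C` strictly between `D` and `B`
(`C ≠ F`), `E` the reflection of `F` over `C`, and `H` a point with
`dist F H = dist F B` and `dist E H = dist F B`, one has `CH² = DC · CB`. -/
theorem mohr_prop27_geometric_mean (D B C E F H : EuclideanSpace ℝ (Fin 2))
    (hDB : D ≠ B) (hF : F = midpoint ℝ D B)
    (hC : Sbtw ℝ D C B) (hCF : C ≠ F)
    (hE : C = midpoint ℝ F E)
    (hFH : dist F H = dist F B) (hEH : dist E H = dist F B) :
    (dist C H) ^ 2 = dist D C * dist C B :=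
  mohr_prop27_geometric_mean_general D B C E F H hF hC hE hFH hEH
end

section
/- Let A, B, C be three affinely independent points of the plane. Then the circumradius R of the triangle ABC satisfies R = (dist A B · dist B C) / (2 · d), where d is the distance from B to the line through A and C (d = Metric.infDist B (affineSpan ℝ {A, C})). -/
/-!
By the law of sines, `2R = BC / sin A`. Writing `B - A` as its component orthogonal to `AC`
plus a multiple of `C - A`, the altitude from `B` is `AB · sin A`, so `2R · altitude = AB · BC`.
-/

open EuclideanGeometry InnerProductGeometry
open scoped InnerProductSpace

namespace InnerProductGeometry
variable {V : Type*} [NormedAddCommGroup V] [InnerProductSpace ℝ V]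

theorem sin_angle_add_smul_mul_norm_of_inner_eq_zero {x y : V} (h : ⟪x, y⟫_ℝ = 0) (t : ℝ) :
    Real.sin (angle (x + t • y) y) * ‖x + t • y‖ = ‖x‖ := by
  rcases eq_or_ne y 0 with rfl | hy
  · simp
  have key := sin_angle_mul_norm_mul_norm (x + t • y) y
  have hrad : ⟪x + t • y, x + t • y⟫_ℝ * ⟪y, y⟫_ℝ - ⟪x + t • y, y⟫_ℝ * ⟪x + t • y, y⟫_ℝ =
      (‖x‖ * ‖y‖) ^ 2 := by
    simp only [inner_add_left, inner_add_right, inner_smul_left, inner_smul_right,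
      real_inner_comm x y, h, real_inner_self_eq_norm_sq, RCLike.conj_to_real]
    ring
  rw [hrad, Real.sqrt_sq (by positivity), ← mul_assoc] at key
  exact mul_right_cancel₀ (norm_ne_zero_iff.2 hy) key

end InnerProductGeometry

namespace EuclideanGeometry
variable {V P : Type*} [NormedAddCommGroup V] [InnerProductSpace ℝ V] [MetricSpace P]
  [NormedAddTorsor V P]

theorem infDist_affineSpan_pair_eq_sin_angle_mul_dist (p p₁ p₂ : P) :
    Metric.infDist p line[ℝ, p₁, p₂] = Real.sin (∠ p p₁ p₂) * dist p p₁ := by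
  set s := line[ℝ, p₁, p₂]
  have hp₁ : p₁ ∈ s := left_mem_affineSpan_pair ℝ p₁ p₂
  have : Nonempty s := ⟨⟨p₁, hp₁⟩⟩
  set F : P := (orthogonalProjection s p : P)
  have hdir : s.direction = ℝ ∙ (p₂ -ᵥ p₁) := by
    rw [direction_affineSpan, vectorSpan_pair_rev]
  have hF : F -ᵥ p₁ ∈ ℝ ∙ (p₂ -ᵥ p₁) :=
    hdir ▸ AffineSubspace.vsub_mem_direction (orthogonalProjection_mem p) hp₁
  obtain ⟨t, ht⟩ := Submodule.mem_span_singleton.1 hF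
  have hperp : ⟪p -ᵥ F, p₂ -ᵥ p₁⟫_ℝ = 0 :=
    (Submodule.mem_orthogonal' _ _).1 (vsub_orthogonalProjection_mem_direction_orthogonal s p) _
      (hdir ▸ Submodule.mem_span_singleton_self _)
  have hsplit : p -ᵥ p₁ = (p -ᵥ F) + t • (p₂ -ᵥ p₁) := by
    rw [ht, vsub_add_vsub_cancel]
  rw [← dist_orthogonalProjection_eq_infDist, angle, hsplit, dist_eq_norm_vsub V p p₁, hsplit,
    sin_angle_add_smul_mul_norm_of_inner_eq_zero hperp, dist_eq_norm_vsub]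

end EuclideanGeometry

/-- Mohr, *Euclides Danicus*, First Part, Proposition 33: the circumradius `R` of a
triangle `ABC` satisfies `R = (AB · BC) / (2 d)`, where `d` is the distance from `B`
to the line `AC` (the altitude from `B`). -/
theorem mohr_prop33_circumradius (A B C : EuclideanSpace ℝ (Fin 2))
    (h : AffineIndependent ℝ ![A, B, C]) :
    (⟨![A, B, C], h⟩ : Affine.Simplex ℝ (EuclideanSpace ℝ (Fin 2)) 2).circumradius =
      (dist A B * dist B C) /
        (2 * Metric.infDist B (affineSpan ℝ ({A, C} : Set (EuclideanSpace ℝ (Fin 2))))) := by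
  have hAB : dist A B ≠ 0 := dist_ne_zero.2 (h.injective.ne (by decide : (0 : Fin 3) ≠ 1))
  have hsine : dist B C / Real.sin (∠ B A C) / 2 =
      (⟨![A, B, C], h⟩ : Affine.Triangle ℝ _).circumradius :=
    Affine.Triangle.dist_div_sin_angle_div_two_eq_circumradius ⟨![A, B, C], h⟩
      (i₁ := 1) (i₂ := 0) (i₃ := 2) (by decide) (by decide) (by decide)
  rw [← hsine, infDist_affineSpan_pair_eq_sin_angle_mul_dist, dist_comm B A, div_div,
    mul_comm (Real.sin _) 2, mul_comm (dist A B), ← mul_assoc, mul_div_mul_right _ _ hAB]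
end

section
/- Let A ≠ C be points of the plane with a = dist A C. Let D be a point with dist C D = a and ⟨D − C, A − C⟩ = 0. Let E be the midpoint of C and D, let F be the point on the ray from E through C with dist E F = dist E A, and let G be the point on the segment from C to A with dist C G = dist C F. Then dist A C · dist A G = (dist G C)², i.e. G divides AC in the golden section (dist G C = ((√5 − 1)/2) · dist A C). -/
open scoped RealInnerProductSpace

/-!
With `a = AC = CD`, the right triangle `ACE` has legs `a` and `a / 2`, so `EA = √5 a / 2`.
As `F` lies on the ray from `E` through `C`, `CF = EF - EC = EA - a / 2 = (√5 - 1) a / 2`,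
and this is `CG`. The number `x = (√5 - 1) / 2` satisfies `x² = 1 - x`, which is exactly
`AC · AG = GC²` for `GC = x a` and `AG = (1 - x) a`.
-/

lemma dist_eq_abs_sub_of_eq_add_smul_sub {V : Type*} [SeminormedAddCommGroup V]
    [NormedSpace ℝ V] {C E F : V} {t : ℝ} (ht : 0 ≤ t) (hF : F = E + t • (C - E)) :
    dist C F = |dist E F - dist E C| := by
  have hEF : dist E F = t * ‖C - E‖ := by
    rw [hF, dist_eq_norm, sub_add_cancel_left, norm_neg, norm_smul, Real.norm_of_nonneg ht]
  have hCF : dist C F = |1 - t| * ‖C - E‖ := by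
    rw [hF, dist_eq_norm, show C - (E + t • (C - E)) = (1 - t) • (C - E) by module,
      norm_smul, Real.norm_eq_abs]
  rw [hEF, hCF, dist_comm E C, dist_eq_norm, ← sub_one_mul, abs_mul, abs_sub_comm,
    abs_norm]

lemma dist_midpoint_sq_of_inner_eq_zero {V : Type*} [NormedAddCommGroup V]
    [InnerProductSpace ℝ V] {A C D : V} (h : ⟪D - C, A - C⟫ = 0) :
    dist (midpoint ℝ C D) A ^ 2 = dist A C ^ 2 + (dist C D / 2) ^ 2 := by
  have hE : midpoint ℝ C D - C = (1 / 2 : ℝ) • (D - C) := by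
    rw [midpoint_eq_smul_add, invOf_eq_inv]; module
  have hperp : ⟪A - C, midpoint ℝ C D - C⟫ = 0 := by
    rw [hE, real_inner_smul_right, real_inner_comm, h, mul_zero]
  have hpyth := norm_sub_sq_eq_norm_sq_add_norm_sq_real hperp
  rw [sub_sub_sub_cancel_right, hE, norm_smul, Real.norm_of_nonneg (by norm_num)] at hpyth
  rw [dist_comm, dist_eq_norm, dist_eq_norm, dist_comm, dist_eq_norm]
  linear_combination hpyth

theorem mohr_prop37_golden_section_general (A C D E F G : EuclideanSpace ℝ (Fin 2)) (a : ℝ)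
    (ha : a = dist A C)
    (hCD : dist C D = a) (hperp : ⟪D - C, A - C⟫ = 0)
    (hE : E = midpoint ℝ C D)
    (hF : ∃ t : ℝ, 0 ≤ t ∧ F = E + t • (C - E)) (hEF : dist E F = dist E A)
    (hG : G ∈ segment ℝ C A) (hCG : dist C G = dist C F) :
    dist A C * dist A G = (dist G C) ^ 2 ∧
      dist G C = ((Real.sqrt 5 - 1) / 2) * dist A C := by
  have ha0 : 0 ≤ a := ha ▸ dist_nonneg
  have hsqrt5 : Real.sqrt 5 ^ 2 = 5 := Real.sq_sqrt (by norm_num)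
  have hsqrt5_ge : 1 ≤ Real.sqrt 5 := Real.one_le_sqrt.mpr (by norm_num)
  have hEA : dist E A = Real.sqrt 5 / 2 * a := by
    have h := dist_midpoint_sq_of_inner_eq_zero hperp
    rw [← hE, hCD, ← ha] at h
    rw [← Real.sqrt_sq dist_nonneg, h, ← Real.sqrt_sq (by positivity : 0 ≤ Real.sqrt 5 / 2 * a)]
    congr 1; linear_combination (-a ^ 2 / 4) * hsqrt5
  have hEC : dist E C = a / 2 := by
    rw [hE, dist_comm, dist_left_midpoint, hCD, Real.norm_two]; ring
  obtain ⟨t, ht, hFt⟩ := hF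
  have hGC : dist G C = (Real.sqrt 5 - 1) / 2 * a := by
    rw [dist_comm, hCG, dist_eq_abs_sub_of_eq_add_smul_sub ht hFt, hEF, hEA, hEC,
      abs_of_nonneg (by nlinarith)]
    ring
  have hAG : dist A G = a - dist G C := by
    linarith [dist_add_dist_of_mem_segment hG, dist_comm A G, dist_comm C A, dist_comm C G]
  rw [← ha, hAG, hGC]
  exact ⟨by linear_combination (-a ^ 2 / 4) * hsqrt5, rfl⟩

/-- Mohr, *Euclides Danicus*, First Part, Proposition 37 (Euclid II.11, the golden
section): with `CD` perpendicular to `CA` and `dist C D = dist A C = a`, `E` the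
midpoint of `C` and `D`, `F` on the ray from `E` through `C` with `dist E F = dist E A`,
and `G` on the segment `CA` with `dist C G = dist C F`, the point `G` divides `AC` so
that the rectangle on the whole `CA` and the part `GA` equals the square on the other
part `GC`; equivalently `GC = ((√5 − 1)/2) · AC`. -/
theorem mohr_prop37_golden_section (A C D E F G : EuclideanSpace ℝ (Fin 2)) (a : ℝ)
    (hAC : A ≠ C) (ha : a = dist A C)
    (hCD : dist C D = a) (hperp : ⟪D - C, A - C⟫ = 0)
    (hE : E = midpoint ℝ C D)
    (hF : ∃ t : ℝ, 0 ≤ t ∧ F = E + t • (C - E)) (hEF : dist E F = dist E A)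
    (hG : G ∈ segment ℝ C A) (hCG : dist C G = dist C F) :
    dist A C * dist A G = (dist G C) ^ 2 ∧
      dist G C = ((Real.sqrt 5 - 1) / 2) * dist A C :=
  mohr_prop37_golden_section_general A C D E F G a ha hCD hperp hE hF hEF hG hCG
end

section
/- Let A, B, D be points of the plane with dist A B = dist A D > 0, dist B D > 0, and (dist B D)² = (dist A B)² − (dist A B) · (dist B D). Then the isosceles triangle BAD has each base angle equal to twice the apex angle: ∠ A B D = ∠ A D B = 2 · ∠ B A D. -/
open EuclideanGeometry Real

/-!
The law of cosines in the isosceles triangle with legs `a` and base `b` gives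
`cos ∠BAD = 1 - b² / (2a²)` at the apex and `cos ∠ABD = b / (2a)` at the base. The golden
relation `b² = a² - ab` turns the first into `(a + b) / (2a) > 0`, so the apex angle is acute,
and then `cos (2 ∠BAD) = 2 cos² ∠BAD - 1 = b / (2a) = cos ∠ABD`; cosine is injective on `[0, π]`.
-/

namespace EuclideanGeometry

variable {V P : Type*} [NormedAddCommGroup V] [InnerProductSpace ℝ V] [MetricSpace P]
  [NormedAddTorsor V P]

theorem dist_sq_eq_two_mul_dist_sq_mul_one_sub_cos_of_dist_eq {A B D : P}
    (h : dist A B = dist A D) :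
    dist B D ^ 2 = 2 * dist A B ^ 2 * (1 - cos (∠ B A D)) := by
  have := law_cos B A D
  rw [dist_comm B A, dist_comm D A, ← h] at this
  linarith

theorem two_mul_dist_mul_cos_angle_eq_dist_of_dist_eq {A B D : P}
    (h : dist A B = dist A D) :
    2 * dist A B * cos (∠ A B D) = dist B D := by
  have := law_cos A B D
  rw [dist_comm D B, ← h] at this
  rcases eq_or_ne B D with rfl | hBD
  · simp
  · have hpos : 0 < dist B D := dist_pos.2 hBD
    nlinarith

end EuclideanGeometry

theorem mohr_prop38_golden_triangle_general (A B D : EuclideanSpace ℝ (Fin 2))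
    (hiso : dist A B = dist A D) (hbase : 0 < dist B D)
    (hgold : (dist B D) ^ 2 = (dist A B) ^ 2 - dist A B * dist B D) :
    ∠ A B D = ∠ A D B ∧ ∠ A B D = 2 * ∠ B A D := by
  refine ⟨angle_eq_angle_of_dist_eq hiso, ?_⟩
  set a := dist A B
  set b := dist B D
  -- `a = 0` would force `b ^ 2 = 0` in the golden relation.
  have ha : 0 < a := by nlinarith [dist_nonneg (x := A) (y := B)]
  have hapex := dist_sq_eq_two_mul_dist_sq_mul_one_sub_cos_of_dist_eq hiso
  have hcos_apex : cos (∠ B A D) = (a + b) / (2 * a) := by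
    field_simp
    nlinarith
  have hcos_base : cos (∠ A B D) = b / (2 * a) := by
    rw [eq_div_iff (by positivity), mul_comm]
    exact two_mul_dist_mul_cos_angle_eq_dist_of_dist_eq hiso
  have hacute : ∠ B A D ≤ π / 2 := by
    refine not_lt.1 fun hobtuse => ?_
    have hneg := cos_neg_of_pi_div_two_lt_of_lt hobtuse
      (by linarith [angle_le_pi B A D, pi_pos])
    rw [hcos_apex] at hneg
    exact hneg.not_ge (by positivity)
  apply injOn_cos ⟨angle_nonneg A B D, angle_le_pi A B D⟩
    ⟨by linarith [angle_nonneg B A D], by linarith⟩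
  rw [cos_two_mul, hcos_apex, hcos_base]
  field_simp
  nlinarith

/-- Mohr, *Euclides Danicus*, First Part, Proposition 38 (Euclid IV.10): an isosceles
triangle `BAD` whose base `BD` equals the greater golden-section part of its legs
(`BD² = AB² − AB·BD`) has each base angle equal to twice the apex angle. -/
theorem mohr_prop38_golden_triangle (A B D : EuclideanSpace ℝ (Fin 2))
    (hiso : dist A B = dist A D) (hpos : 0 < dist A B) (hbase : 0 < dist B D)
    (hgold : (dist B D) ^ 2 = (dist A B) ^ 2 - dist A B * dist B D) :
    ∠ A B D = ∠ A D B ∧ ∠ A B D = 2 * ∠ B A D :=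
  mohr_prop38_golden_triangle_general A B D hiso hbase hgold
end

section
/- Let C, A, B be the vertices of an equilateral triangle of side s > 0 in the plane, and let S > 0. Put m = √(s²/4 + S²) − s/2 and v = √(m²/4 + s·m) − m/2 (one has 0 < v < s). Let F = A + (v/s) · (C − A) (so F lies on segment AC with dist A F = v), and let E be the intersection point of the line through B and F with the line through A in direction C − B (the parallel to BC through A). Then dist E F = S. -/
/-! Since `AE ∥ BC`, the triangles `AEF` and `CBF` are similar (intercept theorem), so
`EF : FB = AF : FC = v : (s - v)`, and `FB² = s² - s v + v²` by the law of cosines at the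
60° angle `A`. The defining equations `m² + s m = S²` and `v² + m v = s m` of the two square
roots then turn `EF² = v² (s² - s v + v²) / (s - v)²` into `S²`. -/

open RealInnerProductSpace

theorem sq_add_mul_eq_of_eq_sqrt_sub_half {p q x : ℝ} (h : 0 ≤ p ^ 2 / 4 + q)
    (hx : x = √(p ^ 2 / 4 + q) - p / 2) : x ^ 2 + p * x = q := by
  have hsq : (x + p / 2) ^ 2 = p ^ 2 / 4 + q := by
    rw [hx, sub_add_cancel, Real.sq_sqrt h]
  linear_combination hsq

theorem pos_of_eq_sqrt_sub_half {p q x : ℝ} (hq : 0 < q)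
    (hx : x = √(p ^ 2 / 4 + q) - p / 2) : 0 < x := by
  have : p / 2 < √(p ^ 2 / 4 + q) :=
    Real.lt_sqrt_of_sq_lt (by linarith [show (p / 2) ^ 2 = p ^ 2 / 4 by ring])
  linarith

theorem linearIndependent_pair_of_inner_sq_lt {V : Type*} [NormedAddCommGroup V]
    [InnerProductSpace ℝ V] {a c : V} (h : ⟪a, c⟫ ^ 2 < ⟪a, a⟫ * ⟪c, c⟫) :
    LinearIndependent ℝ ![a, c] := by
  rw [LinearIndependent.pair_iff]
  intro x y hxy
  have ha : x * ⟪a, a⟫ + y * ⟪c, a⟫ = 0 := by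
    simpa [inner_add_left, real_inner_smul_left] using congrArg (⟪·, a⟫) hxy
  have hc : x * ⟪a, c⟫ + y * ⟪c, c⟫ = 0 := by
    simpa [inner_add_left, real_inner_smul_left] using congrArg (⟪·, c⟫) hxy
  rw [real_inner_comm a c] at ha
  have hgram : ⟪a, a⟫ * ⟪c, c⟫ - ⟪a, c⟫ ^ 2 ≠ 0 := by linarith
  constructor
  · apply (mul_eq_zero.mp _).resolve_right hgram
    linear_combination ⟪c, c⟫ * ha - ⟪a, c⟫ * hc
  · apply (mul_eq_zero.mp _).resolve_right hgram
    linear_combination ⟪a, a⟫ * hc - ⟪a, c⟫ * ha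

/-- Intercept theorem: `EF : FB = AF : FC` where `F = A + t • (C - A)`. -/
theorem smul_sub_eq_smul_sub_of_mem_parallel {V : Type*} [AddCommGroup V] [Module ℝ V]
    {A B C E : V} (hind : LinearIndependent ℝ ![A - B, C - B]) (t : ℝ)
    (hE₁ : E ∈ line[ℝ, B, A + t • (C - A)])
    (hE₂ : E ∈ AffineSubspace.mk' A (Submodule.span ℝ {C - B})) :
    (1 - t) • (E - (A + t • (C - A))) = t • (A + t • (C - A) - B) := by
  set F := A + t • (C - A)
  obtain ⟨u, hu⟩ : ∃ u : ℝ, u • (F - B) = E - B := by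
    rw [← sub_add_cancel E B] at hE₁
    simpa using vadd_left_mem_affineSpan_pair.mp hE₁
  obtain ⟨r, hr⟩ : ∃ r : ℝ, r • (C - B) = E - A := by
    simpa [Submodule.mem_span_singleton] using AffineSubspace.mem_mk'.mp hE₂
  have hcoeff : (u * (1 - t) - 1) • (A - B) + (u * t - r) • (C - B) = 0 := by
    linear_combination (norm := module) hu - hr
  have hu' : u * (1 - t) = 1 := by
    linarith [(LinearIndependent.pair_iff.mp hind _ _ hcoeff).1]
  linear_combination (norm := module) (t - 1) • hu + hu' • (F - B)

section Equilateral

variable {V : Type*} [NormedAddCommGroup V] [InnerProductSpace ℝ V] {A B C : V} {s : ℝ}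

theorem inner_sub_sub_of_equilateral (hAB : dist A B = s) (hBC : dist B C = s)
    (hCA : dist C A = s) : ⟪A - B, C - B⟫ = s ^ 2 / 2 := by
  rw [real_inner_eq_norm_mul_self_add_norm_mul_self_sub_norm_sub_mul_self_div_two,
    sub_sub_sub_cancel_right, ← dist_eq_norm, ← dist_eq_norm, ← dist_eq_norm, hAB,
    dist_comm, hBC, dist_comm, hCA]
  ring

theorem linearIndependent_of_equilateral (hs : s ≠ 0) (hAB : dist A B = s) (hBC : dist B C = s)
    (hCA : dist C A = s) : LinearIndependent ℝ ![A - B, C - B] := by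
  apply linearIndependent_pair_of_inner_sq_lt
  rw [inner_sub_sub_of_equilateral hAB hBC hCA, real_inner_self_eq_norm_sq,
    real_inner_self_eq_norm_sq, ← dist_eq_norm, ← dist_eq_norm, hAB, dist_comm, hBC]
  have : 0 < s ^ 4 := by positivity
  linarith

theorem dist_add_smul_sub_sq_of_equilateral (hAB : dist A B = s) (hBC : dist B C = s)
    (hCA : dist C A = s) (t : ℝ) :
    dist (A + t • (C - A)) B ^ 2 = s ^ 2 * (1 - t + t ^ 2) := by
  have hdecomp : A + t • (C - A) - B = (1 - t) • (A - B) + t • (C - B) := by module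
  have hA : ‖A - B‖ = s := by rw [← dist_eq_norm, hAB]
  have hC : ‖C - B‖ = s := by rw [← dist_eq_norm, dist_comm, hBC]
  rw [dist_eq_norm, hdecomp, norm_add_sq_real, norm_smul, norm_smul, inner_smul_left,
    inner_smul_right, inner_sub_sub_of_equilateral hAB hBC hCA, hA, hC, Real.norm_eq_abs,
    Real.norm_eq_abs, mul_pow, mul_pow, sq_abs, sq_abs]
  simp only [conj_trivial]
  ring

end Equilateral

theorem neusis_length_sq {s S m v : ℝ} (hmS : m ^ 2 + s * m = S ^ 2)
    (hvm : v ^ 2 + m * v = s * m) : S ^ 2 * (s - v) ^ 2 = v ^ 2 * (s ^ 2 - s * v + v ^ 2) := by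
  have hmv : m * (s - v) = v ^ 2 := by linear_combination -hvm
  linear_combination (-(s - v) ^ 2) * hmS + ((s + m) * (s - v) + v ^ 2) * hmv

/-- Mohr, *Euclides Danicus*, Second Part, Proposition 3: given an equilateral
triangle `CAB` of side `s` and a length `S > 0`, setting
`m = √(s²/4 + S²) − s/2` and `v = √(m²/4 + s·m) − m/2`, one has `0 < v < s`; and if
`F` is the point of segment `AC` with `dist A F = v` and `E` is the intersection of
the line `BF` with the parallel to `BC` through `A`, then `dist E F = S`. -/
theorem mohr_II_prop3_neusis (C A B F E : EuclideanSpace ℝ (Fin 2)) (s S : ℝ)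
    (hs : 0 < s) (hS : 0 < S)
    (hAB : dist A B = s) (hBC : dist B C = s) (hCA : dist C A = s)
    (m v : ℝ)
    (hm : m = Real.sqrt (s ^ 2 / 4 + S ^ 2) - s / 2)
    (hv : v = Real.sqrt (m ^ 2 / 4 + s * m) - m / 2)
    (hF : F = A + (v / s) • (C - A))
    (hE₁ : E ∈ affineSpan ℝ ({B, F} : Set (EuclideanSpace ℝ (Fin 2))))
    (hE₂ : E ∈ AffineSubspace.mk' A (Submodule.span ℝ {C - B})) :
    0 < v ∧ v < s ∧ dist E F = S := by
  have hm0 : 0 < m := pos_of_eq_sqrt_sub_half (by positivity) hm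
  have hmS : m ^ 2 + s * m = S ^ 2 := sq_add_mul_eq_of_eq_sqrt_sub_half (by positivity) hm
  have hv0 : 0 < v := pos_of_eq_sqrt_sub_half (by positivity) hv
  have hvm : v ^ 2 + m * v = s * m := sq_add_mul_eq_of_eq_sqrt_sub_half (by positivity) hv
  have hvs : v < s := by nlinarith
  refine ⟨hv0, hvs, ?_⟩
  have hratio := smul_sub_eq_smul_sub_of_mem_parallel
    (linearIndependent_of_equilateral hs.ne' hAB hBC hCA) (v / s) (hF ▸ hE₁) hE₂
  have hFB := dist_add_smul_sub_sq_of_equilateral hAB hBC hCA (v / s)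
  rw [← hF] at hratio hFB
  have hdist : (s - v) * dist E F = v * dist F B := by
    have := congrArg norm hratio
    rw [norm_smul, norm_smul, Real.norm_eq_abs, Real.norm_eq_abs, ← dist_eq_norm, ← dist_eq_norm,
      abs_of_pos (by rwa [sub_pos, div_lt_one hs]), abs_of_pos (by positivity)] at this
    field_simp at this
    linarith
  have hFB' : dist F B ^ 2 = s ^ 2 - s * v + v ^ 2 := by
    rw [hFB]
    field_simp
  have hsq : ((s - v) * dist E F) ^ 2 = ((s - v) * S) ^ 2 := by
    rw [hdist, mul_pow, mul_pow, hFB']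
    linear_combination -neusis_length_sq hmS hvm
  have hsv : 0 < s - v := sub_pos.mpr hvs
  exact mul_left_cancel₀ hsv.ne'
    ((sq_eq_sq₀ (mul_nonneg hsv.le dist_nonneg) (mul_nonneg hsv.le hS.le)).mp hsq)
end

section
/- Let A, B, C, D be the vertices of a square of side s > 0, with B = A + s·u, C = B + s·w, D = A + s·w for orthonormal vectors u, w. Let R > 0, put f = √(s² + R²) − s and x = √(f²/4 + s·f) − f/2 (one has 0 < x < s). Let K = D + x·u (a point of segment DC), and let I be the intersection point of the line through B and K with the line through A and D. Then dist K I = R. -/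
/-!
Both `f` and `x` are positive roots of quadratics: `f² + 2sf = R²` and `x² + fx = sf`.
Measuring along `u` from the line `AD`, the points `B`, `K`, `I` of the line `BK` sit at
`s`, `x`, `0`, so by the intercept theorem `KI · (s - x) = x · KB`, with
`KB² = (s - x)² + s²`. Eliminating `f` from the two quadratics gives exactly
`x² ((s - x)² + s²) = R² (s - x)²`.
-/

open scoped RealInnerProductSpace

theorem pos_and_sq_add_mul_eq_of_eq_sqrt_sub {b c y : ℝ} (hb : 0 ≤ b) (hc : 0 < c)
    (hy : y = √(b ^ 2 / 4 + c) - b / 2) : 0 < y ∧ y ^ 2 + b * y = c := by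
  have hsq := Real.sq_sqrt (by positivity : 0 ≤ b ^ 2 / 4 + c)
  subst hy
  exact ⟨sub_pos.mpr ((Real.lt_sqrt (by positivity)).mpr (by nlinarith)),
    by linear_combination hsq⟩

theorem mohr_neusis_root_spec {s R f x : ℝ} (hs : 0 < s) (hR : 0 < R)
    (hf : f = √(s ^ 2 + R ^ 2) - s) (hx : x = √(f ^ 2 / 4 + s * f) - f / 2) :
    0 < x ∧ x < s ∧ x ^ 2 * ((x - s) ^ 2 + s ^ 2) = R ^ 2 * (s - x) ^ 2 := by
  obtain ⟨hf0, hfR⟩ := pos_and_sq_add_mul_eq_of_eq_sqrt_sub (b := 2 * s) (y := f)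
    (by positivity) (by positivity : 0 < R ^ 2) (by rw [hf]; ring_nf)
  obtain ⟨hx0, hxf⟩ := pos_and_sq_add_mul_eq_of_eq_sqrt_sub hf0.le (by positivity) hx
  refine ⟨hx0, by nlinarith, ?_⟩
  linear_combination ((x - s) ^ 2 + s ^ 2 + f * (s - x)) * hxf + (s - x) ^ 2 * hfR

theorem AffineMap.apply_eq_of_mem_affineSpan_pair {k V₁ P₁ V₂ P₂ : Type*} [Ring k]
    [AddCommGroup V₁] [Module k V₁] [AddTorsor V₁ P₁] [AddCommGroup V₂] [Module k V₂]
    [AddTorsor V₂ P₂] (φ : P₁ →ᵃ[k] P₂) {p₁ p₂ p : P₁} (h : φ p₁ = φ p₂)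
    (hp : p ∈ line[k, p₁, p₂]) : φ p = φ p₁ := by
  obtain ⟨r, rfl⟩ := mem_affineSpan_pair_iff_exists_lineMap_eq.mp hp
  rw [φ.apply_lineMap, ← h, AffineMap.lineMap_same_apply]

/-- The intercept theorem: along a line, distances are proportional to the increments of any
affine function. -/
theorem dist_mul_abs_sub_of_mem_affineSpan_pair {V P : Type*} [NormedAddCommGroup V]
    [NormedSpace ℝ V] [MetricSpace P] [NormedAddTorsor V P] (φ : P →ᵃ[ℝ] ℝ) {p₁ p₂ p : P}
    (hp : p ∈ line[ℝ, p₁, p₂]) :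
    dist p₂ p * |φ p₁ - φ p₂| = |φ p₂ - φ p| * dist p₂ p₁ := by
  obtain ⟨r, rfl⟩ := mem_affineSpan_pair_iff_exists_lineMap_eq.mp hp
  have hφ : φ p₂ - φ (AffineMap.lineMap p₁ p₂ r) = (1 - r) * (φ p₂ - φ p₁) := by
    rw [φ.apply_lineMap, AffineMap.lineMap_apply_ring']
    ring
  rw [hφ, dist_comm, dist_lineMap_right, dist_comm p₂, abs_mul, abs_sub_comm (φ p₂),
    Real.norm_eq_abs]
  ring

theorem norm_smul_add_smul_sq_of_orthonormal {F : Type*} [NormedAddCommGroup F]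
    [InnerProductSpace ℝ F] {u w : F} (hu : ‖u‖ = 1) (hw : ‖w‖ = 1) (huw : ⟪u, w⟫ = 0)
    (a b : ℝ) : ‖a • u + b • w‖ ^ 2 = a ^ 2 + b ^ 2 := by
  have horth : ⟪a • u, b • w⟫ = 0 := by
    rw [real_inner_smul_left, real_inner_smul_right, huw, mul_zero, mul_zero]
  rw [sq, norm_add_sq_eq_norm_sq_add_norm_sq_real horth, norm_smul, norm_smul, hu, hw]
  simp only [mul_one, Real.norm_eq_abs, abs_mul_abs_self, sq]

theorem mohr_II_prop4_neusis_general (A B D K I : EuclideanSpace ℝ (Fin 2))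
    (u w : EuclideanSpace ℝ (Fin 2)) (s R : ℝ)
    (hu : ‖u‖ = 1) (hw : ‖w‖ = 1) (huw : ⟪u, w⟫ = 0)
    (hs : 0 < s) (hR : 0 < R)
    (hB : B = A + s • u) (hD : D = A + s • w)
    (f x : ℝ)
    (hf : f = Real.sqrt (s ^ 2 + R ^ 2) - s)
    (hx : x = Real.sqrt (f ^ 2 / 4 + s * f) - f / 2)
    (hK : K = D + x • u)
    (hI₁ : I ∈ affineSpan ℝ ({B, K} : Set (EuclideanSpace ℝ (Fin 2))))
    (hI₂ : I ∈ affineSpan ℝ ({A, D} : Set (EuclideanSpace ℝ (Fin 2)))) :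
    0 < x ∧ x < s ∧ dist K I = R := by
  obtain ⟨hx0, hxs, hroot⟩ := mohr_neusis_root_spec hs hR hf hx
  refine ⟨hx0, hxs, ?_⟩
  have hsx : 0 < s - x := sub_pos.2 hxs
  let φ : EuclideanSpace ℝ (Fin 2) →ᵃ[ℝ] ℝ := (innerₛₗ ℝ u).toAffineMap
  have hφ (P : EuclideanSpace ℝ (Fin 2)) : φ P = ⟪u, P⟫ := rfl
  have huu : ⟪u, u⟫ = 1 := by rw [real_inner_self_eq_norm_sq, hu, one_pow]
  have hφD : φ D = φ A := by
    simp only [hφ, hD, inner_add_right, real_inner_smul_right, huw, mul_zero, add_zero]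
  have hφI : φ I = φ A := φ.apply_eq_of_mem_affineSpan_pair hφD.symm hI₂
  have hφBK : φ B - φ K = s - x := by
    simp only [hφ, hK, hB, hD, inner_add_right, real_inner_smul_right, huw, huu]
    ring
  have hφKI : φ K - φ I = x := by
    simp only [hφI, hφ, hK, hD, inner_add_right, real_inner_smul_right, huw, huu]
    ring
  have hKB : dist K B ^ 2 = (x - s) ^ 2 + s ^ 2 := by
    rw [dist_eq_norm, ← norm_smul_add_smul_sq_of_orthonormal hu hw huw, hK, hD, hB]
    congr 2
    module
  have hintercept := dist_mul_abs_sub_of_mem_affineSpan_pair φ hI₁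
  rw [hφBK, hφKI, abs_of_pos hsx, abs_of_pos hx0] at hintercept
  have hxKB : x * dist K B = R * (s - x) := by
    refine (sq_eq_sq₀ (by positivity) (by positivity)).1 ?_
    rw [mul_pow, hKB, hroot, mul_pow]
  exact mul_right_cancel₀ hsx.ne' (hintercept.trans hxKB)

/-- Mohr, *Euclides Danicus*, Second Part, Proposition 4: given a square `ABCD` of
side `s` and a length `R > 0`, setting `f = √(s² + R²) − s` and
`x = √(f²/4 + s·f) − f/2`, one has `0 < x < s`; and if `K` is the point of segment
`DC` with `dist D K = x` and `I` is the intersection of the line `BK` with the line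
`AD`, then `dist K I = R`. -/
theorem mohr_II_prop4_neusis (A B C D K I : EuclideanSpace ℝ (Fin 2))
    (u w : EuclideanSpace ℝ (Fin 2)) (s R : ℝ)
    (hu : ‖u‖ = 1) (hw : ‖w‖ = 1) (huw : ⟪u, w⟫ = 0)
    (hs : 0 < s) (hR : 0 < R)
    (hB : B = A + s • u) (hC : C = B + s • w) (hD : D = A + s • w)
    (f x : ℝ)
    (hf : f = Real.sqrt (s ^ 2 + R ^ 2) - s)
    (hx : x = Real.sqrt (f ^ 2 / 4 + s * f) - f / 2)
    (hK : K = D + x • u)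
    (hI₁ : I ∈ affineSpan ℝ ({B, K} : Set (EuclideanSpace ℝ (Fin 2))))
    (hI₂ : I ∈ affineSpan ℝ ({A, D} : Set (EuclideanSpace ℝ (Fin 2)))) :
    0 < x ∧ x < s ∧ dist K I = R :=
  mohr_II_prop4_neusis_general A B D K I u w s R hu hw huw hs hR hB hD f x hf hx hK hI₁ hI₂
end

section
/- Let A ≠ E be points of the plane, e = dist A E, and let i > 0. Let O be the point on segment AE with dist A O = √(i²/4 + e·i) − i/2; this value lies strictly between 0 and e, and O satisfies (dist A O)² = (dist O E) · i. -/
/-! `x = √(i²/4 + e·i) − i/2` is the positive root of `x² + i·x = e·i` (complete the square), and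
since `O` lies on the segment `AE` we have `OE = e − AO`, so `AO² = e·i − i·AO = OE·i`. -/

lemma sq_sqrt_sub_half_eq {e i : ℝ} (h : 0 ≤ i ^ 2 / 4 + e * i) :
    (√(i ^ 2 / 4 + e * i) - i / 2) ^ 2 = (e - (√(i ^ 2 / 4 + e * i) - i / 2)) * i := by
  linear_combination Real.sq_sqrt h

lemma sqrt_sub_half_mem_Ioo {e i : ℝ} (he : 0 < e) (hi : 0 < i) :
    √(i ^ 2 / 4 + e * i) - i / 2 ∈ Set.Ioo 0 e := by
  constructor
  · rw [sub_pos, Real.lt_sqrt (by positivity)]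
    nlinarith
  · rw [sub_lt_iff_lt_add, Real.sqrt_lt' (by positivity)]
    nlinarith

/-- Mohr, *Euclides Danicus*, Second Part, Proposition 5: given `A ≠ E` with
`e = dist A E` and a length `i > 0`, the value `√(i²/4 + e·i) − i/2` lies strictly
between `0` and `e`, and the point `O` of the segment `AE` at this distance from `A`
satisfies `AO² = OE · i` (the square on `AO` equals the rectangle contained by `OE`
and the given length `i`). -/
theorem mohr_II_prop5 (A E O : EuclideanSpace ℝ (Fin 2)) (e i : ℝ)
    (hAE : A ≠ E) (he : e = dist A E) (hi : 0 < i)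
    (hO : O ∈ segment ℝ A E)
    (hAO : dist A O = Real.sqrt (i ^ 2 / 4 + e * i) - i / 2) :
    Real.sqrt (i ^ 2 / 4 + e * i) - i / 2 ∈ Set.Ioo 0 e ∧
      (dist A O) ^ 2 = dist O E * i := by
  have he_pos : 0 < e := he ▸ dist_pos.2 hAE
  refine ⟨sqrt_sub_half_mem_Ioo he_pos hi, ?_⟩
  have hOE : dist O E = e - dist A O := by
    rw [he, ← dist_add_dist_of_mem_segment hO]
    ring
  rw [hOE, hAO]
  exact sq_sqrt_sub_half_eq (by positivity)
end

section
/- Let A ≠ B be points of the plane, G the midpoint of A and B, and r = (dist A B)/2. Let C be a point with dist G C = r and dist C A = dist C B. Let E be a point strictly between A and B, and let D ≠ C be a point with dist G D = r lying on the line through C and E. Then dist A D · dist E B = dist D B · dist A E (i.e. AD : DB = AE : EB). -/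
/-!
Put the origin at the centre `G` and write `b = B - G`, so that `A - G = -b`, and `c = C - G`,
which is orthogonal to `b` with `‖c‖ = ‖b‖ = r`. Then `E - G = μ • b` with `|μ| ≤ 1`, and a point
`d` of the circle satisfies `AD² = 2r² + 2⟪d, b⟫` and `DB² = 2r² - 2⟪d, b⟫`. Meeting the line from
the pole `c` through `μ • b` with the circle (inverse stereographic projection) gives
`⟪d, b⟫ = 2μr² / (1 + μ²)`, hence `AD² : DB² = (1 + μ)² : (1 - μ)² = AE² : EB²`.
-/

open RealInnerProductSpace

section InnerProductSpace

variable {V : Type*} [NormedAddCommGroup V] [InnerProductSpace ℝ V] {b c d : V} {μ s : ℝ}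

theorem one_add_sq_mul_inner_eq (hcb : ⟪c, b⟫ = 0) (hc : ‖c‖ = ‖b‖)
    (hd : d = c + s • (μ • b - c)) (hs : s ≠ 0) (hdb : ‖d‖ = ‖b‖) :
    (1 + μ ^ 2) * ⟪d, b⟫ = 2 * μ * ‖b‖ ^ 2 := by
  have hd' : d = (1 - s) • c + (s * μ) • b := by rw [hd]; module
  have hinner : ⟪d, b⟫ = s * μ * ‖b‖ ^ 2 := by
    rw [hd', inner_add_left, real_inner_smul_left, real_inner_smul_left, hcb,
      real_inner_self_eq_norm_sq]
    ring
  have hnorm : s * ((1 + μ ^ 2) * s - 2) * ‖b‖ ^ 2 = 0 := by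
    have h : ‖d‖ ^ 2 = ‖b‖ ^ 2 := by rw [hdb]
    rw [hd', norm_add_sq_real, norm_smul, norm_smul, real_inner_smul_left, real_inner_smul_right,
      hcb, hc, Real.norm_eq_abs, Real.norm_eq_abs, mul_pow, mul_pow, sq_abs, sq_abs] at h
    linear_combination h
  rcases mul_eq_zero.1 hnorm with h | h
  · rw [hinner]
    linear_combination μ * ‖b‖ ^ 2 * (mul_eq_zero.1 h).resolve_left hs
  · rw [pow_eq_zero_iff two_ne_zero, norm_eq_zero] at h
    simp [h]

theorem norm_add_mul_eq_norm_sub_mul (hμ : |μ| ≤ 1) (hdb : ‖d‖ = ‖b‖)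
    (h : (1 + μ ^ 2) * ⟪d, b⟫ = 2 * μ * ‖b‖ ^ 2) :
    ‖d + b‖ * ‖b - μ • b‖ = ‖d - b‖ * ‖μ • b + b‖ := by
  obtain ⟨hμ₁, hμ₂⟩ := abs_le.1 hμ
  have h₁ : 0 ≤ 1 - μ := by linarith
  have h₂ : 0 ≤ 1 + μ := by linarith
  rw [show b - μ • b = (1 - μ) • b by module, show μ • b + b = (1 + μ) • b by module, norm_smul,
    norm_smul, Real.norm_of_nonneg h₁, Real.norm_of_nonneg h₂]
  refine (sq_eq_sq₀ (by positivity) (by positivity)).1 ?_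
  rw [mul_pow, mul_pow, mul_pow, mul_pow, norm_add_sq_real, norm_sub_sq_real, hdb]
  linear_combination (4 * ‖b‖ ^ 2) * h

end InnerProductSpace

theorem Wbtw.exists_vsub_midpoint_eq_smul {V P : Type*} [AddCommGroup V] [Module ℝ V]
    [AddTorsor V P] {A E B : P} (h : Wbtw ℝ A E B) :
    ∃ μ : ℝ, |μ| ≤ 1 ∧ E -ᵥ midpoint ℝ A B = μ • (B -ᵥ midpoint ℝ A B) := by
  obtain ⟨t, ⟨ht₀, ht₁⟩, rfl⟩ := h
  refine ⟨2 * t - 1, abs_le.2 ⟨by linarith, by linarith⟩, ?_⟩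
  rw [← vsub_sub_vsub_cancel_right _ _ A, AffineMap.lineMap_vsub_left, midpoint_vsub_left,
    right_vsub_midpoint, invOf_eq_inv]
  module

theorem inner_vsub_midpoint_eq_zero_of_dist_eq {V P : Type*} [NormedAddCommGroup V]
    [InnerProductSpace ℝ V] [MetricSpace P] [NormedAddTorsor V P] {A B C : P}
    (h : dist C A = dist C B) : ⟪C -ᵥ midpoint ℝ A B, B -ᵥ midpoint ℝ A B⟫ = 0 := by
  rw [right_vsub_midpoint, inner_smul_right,
    EuclideanGeometry.inner_vsub_vsub_of_dist_eq_of_dist_eq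
      (dist_left_midpoint_eq_dist_right_midpoint A B) (by rwa [dist_comm A, dist_comm B]),
    mul_zero]

theorem mohr_II_prop6_general (A B G C D E : EuclideanSpace ℝ (Fin 2)) (r : ℝ)
    (hG : G = midpoint ℝ A B) (hr : r = dist A B / 2)
    (hGC : dist G C = r) (hCiso : dist C A = dist C B)
    (hE : Sbtw ℝ A E B)
    (hDC : D ≠ C) (hGD : dist G D = r)
    (hDline : D ∈ affineSpan ℝ ({C, E} : Set (EuclideanSpace ℝ (Fin 2)))) :
    dist A D * dist E B = dist D B * dist A E := by
  obtain ⟨μ, hμ, hEG⟩ := hE.wbtw.exists_vsub_midpoint_eq_smul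
  have hCB := inner_vsub_midpoint_eq_zero_of_dist_eq hCiso
  rw [← hG, vsub_eq_sub, vsub_eq_sub] at hEG hCB
  obtain ⟨s, hs⟩ := mem_affineSpan_pair_iff_exists_lineMap_eq.1 hDline
  have hs₀ : s ≠ 0 := by rintro rfl; exact hDC (by rw [← hs, AffineMap.lineMap_apply_zero])
  have hDG : D - G = (C - G) + s • (μ • (B - G) - (C - G)) := by
    rw [← hs, AffineMap.lineMap_apply_module, ← hEG]; module
  have hAG : A - G = -(B - G) := by rw [hG, midpoint_eq_smul_add, invOf_eq_inv]; module
  have hBG : ‖B - G‖ = r := by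
    rw [← dist_eq_norm, hG, dist_right_midpoint, hr]; norm_num; ring
  have hCG : ‖C - G‖ = ‖B - G‖ := by rw [← dist_eq_norm, dist_comm, hGC, hBG]
  have hD : ‖D - G‖ = ‖B - G‖ := by rw [← dist_eq_norm, dist_comm, hGD, hBG]
  convert norm_add_mul_eq_norm_sub_mul hμ hD (one_add_sq_mul_inner_eq hCB hCG hDG hs₀ hD)
    using 2
  · rw [dist_comm, dist_eq_norm, ← sub_sub_sub_cancel_right D A G, hAG, sub_neg_eq_add]
  · rw [dist_comm, dist_eq_norm, ← sub_sub_sub_cancel_right B E G, hEG]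
  · rw [dist_eq_norm, ← sub_sub_sub_cancel_right D B G]
  · rw [dist_comm, dist_eq_norm, ← sub_sub_sub_cancel_right E A G, hEG, hAG, sub_neg_eq_add]

/-- Mohr, *Euclides Danicus*, Second Part, Proposition 6: `C` and `D` lie on the
circle with diameter `AB` (center `G`, radius `r = AB/2`), with `C` the midpoint of
one of the semicircular arcs (`dist C A = dist C B`); if `E` lies strictly between
`A` and `B` and `D ≠ C` is on the line `CE`, then the line from `D` through `E`
divides `AB` in the ratio `AD : DB`, i.e. `AD · EB = DB · AE`. -/
theorem mohr_II_prop6 (A B G C D E : EuclideanSpace ℝ (Fin 2)) (r : ℝ)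
    (hAB : A ≠ B) (hG : G = midpoint ℝ A B) (hr : r = dist A B / 2)
    (hGC : dist G C = r) (hCiso : dist C A = dist C B)
    (hE : Sbtw ℝ A E B)
    (hDC : D ≠ C) (hGD : dist G D = r)
    (hDline : D ∈ affineSpan ℝ ({C, E} : Set (EuclideanSpace ℝ (Fin 2)))) :
    dist A D * dist E B = dist D B * dist A E :=
  mohr_II_prop6_general A B G C D E r hG hr hGC hCiso hE hDC hGD hDline
end

section
/- Let B ≠ D be points of the plane, r₁ > r₂ > 0, and let F = B + (r₁/(r₁ − r₂)) · (D − B) (the external center of similitude of the circles of center B radius r₁ and center D radius r₂). Let L be any line of the plane passing through F whose distance from B equals r₁ (i.e. L is tangent to the first circle). Then the distance from D to L equals r₂ (L is tangent to the second circle). -/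
open AffineMap Metric

/-!
The homothety of center `F` and ratio `r₂ / r₁` maps `B` to `D`, fixes every line through `F`,
and scales distances by `r₂ / r₁`; so it carries `infDist B L = r₁` to `infDist D L = r₂`.
-/

theorem AffineSubspace.image_homothety_of_mem {k V P : Type*} [Field k] [AddCommGroup V]
    [Module k V] [AddTorsor V P] {s : AffineSubspace k P} {c : P} (hc : c ∈ s) {r : k}
    (hr : r ≠ 0) : homothety c r '' s = s := by
  refine Set.Subset.antisymm (Set.image_subset_iff.2 fun p hp => homothety_mem hc r hp)
    fun p hp => ⟨homothety c r⁻¹ p, homothety_mem hc r⁻¹ hp, ?_⟩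
  rw [← comp_apply, ← homothety_mul, mul_inv_cancel₀ hr, homothety_one, id_apply]

theorem Metric.infDist_homothety_image {𝕜 V P : Type*} [NormedField 𝕜]
    [SeminormedAddCommGroup V] [NormedSpace 𝕜 V] [PseudoMetricSpace P] [NormedAddTorsor V P]
    (c x : P) {r : 𝕜} (hr : r ≠ 0) (s : Set P) :
    infDist (homothety c r x) (homothety c r '' s) = ‖r‖ * infDist x s := by
  have hvsub : Isometry (· -ᵥ c : P → V) := (IsometryEquiv.vaddConst c).symm.isometry
  have hvadd : Isometry (· +ᵥ c : V → P) := (IsometryEquiv.vaddConst c).isometry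
  have hcomp : (homothety c r : P → P) = (· +ᵥ c) ∘ (r • ·) ∘ (· -ᵥ c) := by
    ext p; simp [homothety_apply]
  rw [hcomp, Set.image_comp, Set.image_comp, Function.comp_apply, Function.comp_apply,
    infDist_image hvadd, Set.image_smul, infDist_smul₀ hr, infDist_image hvsub]

theorem homothety_lineMap_apply_left {k V P : Type*} [Field k] [AddCommGroup V] [Module k V]
    [AddTorsor V P] (B D : P) {r₁ r₂ : k} (h₁ : r₁ ≠ 0) (h : r₁ ≠ r₂) :
    homothety (lineMap B D (r₁ / (r₁ - r₂))) (r₂ / r₁) B = D := by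
  have hcoef : -(r₂ / r₁ * (r₁ / (r₁ - r₂))) + r₁ / (r₁ - r₂) = 1 := by
    field_simp [sub_ne_zero.2 h]
    ring
  rw [homothety_apply, ← neg_vsub_eq_vsub_rev, lineMap_vsub_left, lineMap_apply, vadd_vadd,
    smul_neg, smul_smul, ← neg_smul, ← add_smul, hcoef, one_smul, vsub_vadd]

theorem mohr_II_prop7_common_tangent_general (B D F : EuclideanSpace ℝ (Fin 2)) (r₁ r₂ : ℝ)
    (hr₂ : 0 < r₂) (hr : r₂ < r₁)
    (hF : F = B + (r₁ / (r₁ - r₂)) • (D - B))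
    (L : AffineSubspace ℝ (EuclideanSpace ℝ (Fin 2)))
    (hFL : F ∈ L)
    (htangent : Metric.infDist B (L : Set (EuclideanSpace ℝ (Fin 2))) = r₁) :
    Metric.infDist D (L : Set (EuclideanSpace ℝ (Fin 2))) = r₂ := by
  have hr₁ : 0 < r₁ := hr₂.trans hr
  have hratio : 0 < r₂ / r₁ := div_pos hr₂ hr₁
  have hF' : F = lineMap B D (r₁ / (r₁ - r₂)) := by
    rw [hF, lineMap_apply_module', add_comm]
  have hBD : homothety F (r₂ / r₁) B = D := hF' ▸ homothety_lineMap_apply_left B D hr₁.ne' hr.ne'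
  rw [← hBD, ← AffineSubspace.image_homothety_of_mem hFL hratio.ne',
    infDist_homothety_image F B hratio.ne', htangent, Real.norm_of_nonneg hratio.le,
    div_mul_cancel₀ r₂ hr₁.ne']

/-- Mohr, *Euclides Danicus*, Second Part, Proposition 7: the point
`F = B + (r₁/(r₁ − r₂)) • (D − B)` (the external center of similitude of the circle
of center `B` and radius `r₁` and the circle of center `D` and radius `r₂`) has the
property that every line through `F` tangent to the first circle is also tangent to
the second circle. -/
theorem mohr_II_prop7_common_tangent (B D F : EuclideanSpace ℝ (Fin 2)) (r₁ r₂ : ℝ)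
    (hBD : B ≠ D) (hr₂ : 0 < r₂) (hr : r₂ < r₁)
    (hF : F = B + (r₁ / (r₁ - r₂)) • (D - B))
    (L : AffineSubspace ℝ (EuclideanSpace ℝ (Fin 2)))
    (hL : Module.finrank ℝ L.direction = 1)
    (hFL : F ∈ L)
    (htangent : Metric.infDist B (L : Set (EuclideanSpace ℝ (Fin 2))) = r₁) :
    Metric.infDist D (L : Set (EuclideanSpace ℝ (Fin 2))) = r₂ :=
  mohr_II_prop7_common_tangent_general B D F r₁ r₂ hr₂ hr hF L hFL htangent
end

section
/- Archimedes' twin-circle property (Mohr's arbelos proposition): let r₁, r₂ > 0, R = r₁ + r₂, ρ = r₁·r₂/R, and let u, v be orthonormal vectors of the plane. Fix A and set D = A + 2r₁·u, F = A + r₁·u (center of the semicircle on AD), B = A + R·u (center of the semicircle on AC, where C = A + 2R·u). Then the point E = A + (r₁(R + r₁)/R)·u + ((r₁/R)·√((R + r₂)² − r₁²))·v satisfies: dist E F = r₁ + ρ, dist E B = R − ρ, and |⟨E − D, u⟩| = ρ. Hence the circle of center E and radius ρ is internally tangent to the circle of center B radius R, externally tangent to the circle of center F radius r₁, and tangent to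 the line through D perpendicular to AC. -/
open scoped RealInnerProductSpace

/-!
In the frame `(A; u, v)` the point `E` has coordinates `(x, y)` with `x = r₁(R + r₁)/R` and
`y² = (r₁/R)²((R + r₂)² − r₁²)`, so all three claims are identities between `x`, `y` and the
abscissae `r₁`, `R`, `2r₁` of `F`, `B`, `D`: Pythagoras gives
`(x − r₁)² + y² = (r₁(R + r₂)/R)² = (r₁ + ρ)²` and `(x − R)² + y² = (R − ρ)²`,
while `x − 2r₁ = −r₁r₂/R = −ρ`.
-/

section Orthonormal

variable {V : Type*} [NormedAddCommGroup V] [InnerProductSpace ℝ V] {u v : V}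

theorem norm_smul_add_smul_of_orthonormal (hu : ‖u‖ = 1) (hv : ‖v‖ = 1) (huv : ⟪u, v⟫ = 0)
    (a b : ℝ) : ‖a • u + b • v‖ = √(a ^ 2 + b ^ 2) := by
  rw [← Real.sqrt_sq (norm_nonneg _), norm_add_sq_real, norm_smul, norm_smul,
    real_inner_smul_left, real_inner_smul_right, huv, hu, hv]
  simp only [Real.norm_eq_abs, mul_one, mul_zero, add_zero, sq_abs]

theorem inner_smul_add_smul_left_of_orthonormal (hu : ‖u‖ = 1) (huv : ⟪u, v⟫ = 0)
    (a b : ℝ) : ⟪a • u + b • v, u⟫ = a := by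
  rw [inner_add_left, real_inner_smul_left, real_inner_smul_left, real_inner_self_eq_norm_sq,
    hu, real_inner_comm, huv]
  ring

end Orthonormal

section TwinCircle

variable {r₁ r₂ R s : ℝ}

theorem twin_circle_dist_sq_inner (hR : R = r₁ + r₂) (hR₀ : R ≠ 0)
    (hs : s ^ 2 = (R + r₂) ^ 2 - r₁ ^ 2) :
    (r₁ * (R + r₁) / R - r₁) ^ 2 + (r₁ / R * s) ^ 2 = (r₁ + r₁ * r₂ / R) ^ 2 := by
  field_simp
  rw [hs, hR]
  ring

theorem twin_circle_dist_sq_outer (hR : R = r₁ + r₂) (hR₀ : R ≠ 0)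
    (hs : s ^ 2 = (R + r₂) ^ 2 - r₁ ^ 2) :
    (r₁ * (R + r₁) / R - R) ^ 2 + (r₁ / R * s) ^ 2 = (R - r₁ * r₂ / R) ^ 2 := by
  field_simp
  rw [hs, hR]
  ring

theorem twin_circle_abscissa_sub (hR : R = r₁ + r₂) (hR₀ : R ≠ 0) :
    r₁ * (R + r₁) / R - 2 * r₁ = -(r₁ * r₂ / R) := by
  field_simp
  rw [hR]
  ring

end TwinCircle

/-- Mohr, *Euclides Danicus*, Second Part, Proposition 9 (Archimedes' twin circles in
the arbelos): with `r₁, r₂ > 0`, `R = r₁ + r₂`, `ρ = r₁·r₂/R`, orthonormal `u, v`,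
`D = A + 2r₁·u`, `F = A + r₁·u`, `B = A + R·u`, the point
`E = A + (r₁(R + r₁)/R)·u + ((r₁/R)·√((R + r₂)² − r₁²))·v` satisfies
`dist E F = r₁ + ρ`, `dist E B = R − ρ` and `|⟪E − D, u⟫| = ρ`: the circle of center
`E` and radius `ρ` is internally tangent to the circle of center `B` and radius `R`,
externally tangent to the circle of center `F` and radius `r₁`, and tangent to the
perpendicular to `AC` through `D`. -/
theorem mohr_II_prop9_twin_circle (A D F B E u v : EuclideanSpace ℝ (Fin 2))
    (r₁ r₂ R ρ : ℝ) (hr₁ : 0 < r₁) (hr₂ : 0 < r₂)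
    (hR : R = r₁ + r₂) (hρ : ρ = r₁ * r₂ / R)
    (hu : ‖u‖ = 1) (hv : ‖v‖ = 1) (huv : ⟪u, v⟫ = 0)
    (hD : D = A + (2 * r₁) • u)
    (hF : F = A + r₁ • u)
    (hB : B = A + R • u)
    (hE : E = A + (r₁ * (R + r₁) / R) • u
        + ((r₁ / R) * Real.sqrt ((R + r₂) ^ 2 - r₁ ^ 2)) • v) :
    dist E F = r₁ + ρ ∧ dist E B = R - ρ ∧ |⟪E - D, u⟫| = ρ := by
  have hR₀ : 0 < R := by linarith
  have hρ₀ : 0 < ρ := by rw [hρ]; positivity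
  have hρR : ρ < R := by rw [hρ, div_lt_iff₀ hR₀]; nlinarith
  set s := √((R + r₂) ^ 2 - r₁ ^ 2)
  have hs : s ^ 2 = (R + r₂) ^ 2 - r₁ ^ 2 := Real.sq_sqrt (by nlinarith)
  have hE_sub : ∀ c : ℝ, E - (A + c • u) = (r₁ * (R + r₁) / R - c) • u + (r₁ / R * s) • v := by
    intro c
    rw [hE]
    module
  subst hD hF hB hρ
  refine ⟨?_, ?_, ?_⟩
  · rw [dist_eq_norm, hE_sub, norm_smul_add_smul_of_orthonormal hu hv huv,
      Real.sqrt_eq_iff_eq_sq (by positivity) (by positivity)]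
    exact twin_circle_dist_sq_inner hR hR₀.ne' hs
  · rw [dist_eq_norm, hE_sub, norm_smul_add_smul_of_orthonormal hu hv huv,
      Real.sqrt_eq_iff_eq_sq (by positivity) (by linarith)]
    exact twin_circle_dist_sq_outer hR hR₀.ne' hs
  · rw [hE_sub, inner_smul_add_smul_left_of_orthonormal hu huv,
      twin_circle_abscissa_sub hR hR₀.ne', abs_neg, abs_of_pos hρ₀]
end

section
/- Let L be a line of the plane and A, B two distinct points not on L and lying strictly on the same side of L, such that the line through A and B meets L in a point G. Let K be a point of L with (dist G K)² = dist G A · dist G B. Then A, B, K are not collinear, and the circle through A, B and K meets L only at K; that is, L is tangent at K to the circumcircle of A, B, K. -/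
/-!
Let `s` be any circle through `A`, `B`, `K`. Since `A` and `B` lie on the same side of `L`, the
point `G` is not between them, so `G` lies outside `s` and its power with respect to `s` is
`GA · GB = GK²`. A line through a point of `s` along which the power is the squared distance to
that point is tangent there (`Sphere.isTangentAt_iff_dist_sq_eq_power`), so `L = GK` meets `s`
only at `K`. If `A`, `B`, `K` were collinear, the line `AB` would pass through the two distinct
points `G`, `K` of `L` and hence lie in `L`, contradicting `A ∉ L`.
-/

open EuclideanGeometry

section Affine

variable {k V P : Type*} [DivisionRing k] [AddCommGroup V] [Module k V] [AddTorsor V P]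

theorem AffineSubspace.affineSpan_pair_eq_of_finrank_direction_eq_one
    {L : AffineSubspace k P} (hL : Module.finrank k L.direction = 1) {p q : P} (hp : p ∈ L)
    (hq : q ∈ L) (hpq : p ≠ q) :
    line[k, p, q] = L := by
  have : FiniteDimensional k (vectorSpan k (L : Set P)) := Module.finite_of_finrank_eq_succ hL
  have hcol : Collinear k (L : Set P) := (collinear_iff_finrank_le_one).2 hL.le
  rw [hcol.affineSpan_eq_of_ne hp hq hpq, AffineSubspace.affineSpan_coe]

theorem Collinear.mem_of_mem_affineSpan_pair {s : AffineSubspace k P} {a b g q : P}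
    (h : Collinear k ({a, b, q} : Set P)) (hg : g ∈ line[k, a, b]) (hgs : g ∈ s) (hqs : q ∈ s)
    (hgq : g ≠ q) : a ∈ s := by
  have hg' : g ∈ affineSpan k ({a, b, q} : Set P) :=
    affineSpan_mono k
      (Set.insert_subset_insert (Set.singleton_subset_iff.2 (Set.mem_insert _ _))) hg
  have hcol : Collinear k ({g, a, b, q} : Set P) :=
    (collinear_insert_iff_of_mem_affineSpan hg').2 h
  have ha : a ∈ line[k, g, q] := hcol.mem_affineSpan_of_mem_of_ne (by simp) (by simp) (by simp) hgq
  exact affineSpan_pair_le_of_mem_of_mem hgs hqs ha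

end Affine

namespace EuclideanGeometry.Sphere

variable {V P : Type*} [NormedAddCommGroup V] [InnerProductSpace ℝ V] [MetricSpace P]
  [NormedAddTorsor V P]

theorem power_eq_mul_dist_of_not_wbtw {s : Sphere P} {a b p : P} (ha : a ∈ s) (hb : b ∈ s)
    (hab : a ≠ b) (hp : p ∈ line[ℝ, a, b]) (hapb : ¬ Wbtw ℝ a p b) :
    s.power p = dist p a * dist p b := by
  have hle : s.radius ≤ dist p s.center := by
    by_contra! hlt
    have hcol : Collinear ℝ ({a, p, b} : Set P) := by
      rw [Set.insert_comm]
      exact collinear_insert_of_mem_affineSpan_pair hp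
    exact hapb (hcol.wbtw_of_dist_eq_of_dist_le (mem_sphere.1 ha) hlt.le (mem_sphere.1 hb) hab)
  exact (mul_dist_eq_power_of_radius_le_dist_center (radius_nonneg_of_mem ha) hp ha hb hle).symm

theorem isTangentAt_of_dist_sq_eq_mul_dist {s : Sphere P} {a b p t : P} (ha : a ∈ s)
    (hb : b ∈ s) (hab : a ≠ b) (hp : p ∈ line[ℝ, a, b]) (hapb : ¬ Wbtw ℝ a p b) (ht : t ∈ s)
    (hpt : dist p t ^ 2 = dist p a * dist p b) : s.IsTangentAt t line[ℝ, p, t] :=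
  isTangentAt_of_dist_sq_eq_power ht <|
    hpt.trans (power_eq_mul_dist_of_not_wbtw ha hb hab hp hapb).symm

end EuclideanGeometry.Sphere

/-- Mohr, *Euclides Danicus*, Second Part, Proposition 10 (converse of the power of a
point): let `A ≠ B` lie strictly on the same side of a line `L`, let `G` be a point
where the line `AB` meets `L`, and let `K ∈ L` satisfy `GK² = GA · GB`. Then `A`, `B`,
`K` are not collinear and any circle through `A`, `B`, `K` meets `L` only at `K`;
that is, `L` is tangent at `K` to the circumcircle of `A`, `B`, `K`. -/
theorem mohr_II_prop10_tangent_circle (A B G K : EuclideanSpace ℝ (Fin 2))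
    (L : AffineSubspace ℝ (EuclideanSpace ℝ (Fin 2)))
    (hL : Module.finrank ℝ L.direction = 1)
    (hAB : A ≠ B)
    (hside : L.SSameSide A B)
    (hGL : G ∈ L) (hGAB : G ∈ affineSpan ℝ ({A, B} : Set (EuclideanSpace ℝ (Fin 2))))
    (hKL : K ∈ L)
    (hK : (dist G K) ^ 2 = dist G A * dist G B) :
    ¬ Collinear ℝ ({A, B, K} : Set (EuclideanSpace ℝ (Fin 2))) ∧
      ∀ (O : EuclideanSpace ℝ (Fin 2)) (ρ : ℝ),
        dist O A = ρ → dist O B = ρ → dist O K = ρ →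
          ∀ X ∈ L, dist O X = ρ → X = K := by
  have hGK : G ≠ K := by
    rintro rfl
    rw [dist_self, zero_pow two_ne_zero, eq_comm, mul_eq_zero, dist_eq_zero, dist_eq_zero] at hK
    rcases hK with rfl | rfl
    exacts [hside.left_notMem hGL, hside.right_notMem hGL]
  refine ⟨fun hcol ↦ hside.left_notMem (hcol.mem_of_mem_affineSpan_pair hGAB hGL hKL hGK), ?_⟩
  intro O ρ hOA hOB hOK X hXL hOX
  let s : Sphere (EuclideanSpace ℝ (Fin 2)) := ⟨O, ρ⟩
  have hmem {Y : EuclideanSpace ℝ (Fin 2)} (hY : dist O Y = ρ) : Y ∈ s :=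
    mem_sphere.2 ((dist_comm _ _).trans hY)
  have hnotbtw : ¬ Wbtw ℝ A G B := fun h ↦ hside.not_wOppSide (h.wOppSide₁₃ hGL)
  have htan := s.isTangentAt_of_dist_sq_eq_mul_dist (hmem hOA) (hmem hOB) hAB hGAB hnotbtw
    (hmem hOK) hK
  rw [AffineSubspace.affineSpan_pair_eq_of_finrank_direction_eq_one hL hGL hKL hGK] at htan
  exact htan.eq_of_mem_of_mem (hmem hOX) hXL
end

section
/- Let A, B, C be three non-collinear points of the plane, and let E be a point on segment CB and K a point on segment CA with dist C E · dist C K = (dist C B · dist C A)/2. Then the area of triangle CEK equals half the area of triangle ABC. If moreover dist C E + dist C K = (dist A B + dist B C + dist C A)/2, then also dist E B + dist B A + dist A K = dist K C + dist C E, so the segment EK divides both the area and the perimeter of the triangle into two equal parts. -/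
/-!
Write `E = lineMap C B s` and `K = lineMap C A t`. Since `B - C` and `A - C` form a basis of the
plane, there is an affine map fixing `C` that multiplies `B - C` by `s` and `A - C` by `t`; it
carries triangle `ABC` onto triangle `CEK` and has determinant `s t`, so it scales area by
`s t = (CE · CK) / (CB · CA) = 1/2`. The perimeter claim is linear arithmetic from
`CE + EB = CB` and `CK + KA = CA`.
-/

open MeasureTheory Module AffineMap

theorem linearIndependent_vsub_of_not_collinear {k V P : Type*} [Field k] [AddCommGroup V]
    [Module k V] [AddTorsor V P] {A B C : P} (h : ¬Collinear k {A, B, C}) :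
    LinearIndependent k ![B -ᵥ C, A -ᵥ C] := by
  rw [LinearIndependent.pair_iff' (vsub_ne_zero.2 (ne₂₃_of_not_collinear h))]
  intro a ha
  have hA : A ∈ line[k, B, C] := by
    rw [Set.pair_comm, ← vsub_vadd A C, ← ha, ← lineMap_apply]
    exact lineMap_mem_affineSpan_pair a C B
  exact h (collinear_insert_of_mem_affineSpan_pair hA)

theorem exists_affineMap_lineMap_lineMap_det {k V P : Type*} [Field k] [AddCommGroup V]
    [Module k V] [AddTorsor V P] (hV : finrank k V = 2) {A B C : P}
    (h : ¬Collinear k {A, B, C}) (s t : k) :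
    ∃ f : P →ᵃ[k] P, f C = C ∧ f B = lineMap C B s ∧ f A = lineMap C A t ∧
      LinearMap.det f.linear = s * t := by
  let b := basisOfLinearIndependentOfCardEqFinrank (linearIndependent_vsub_of_not_collinear h)
    (by simp [hV])
  let L := Matrix.toLin b b (Matrix.diagonal ![s, t])
  have hL (i : Fin 2) : L (b i) = ![s, t] i • b i := by
    simp [L, Matrix.toLin_self, Matrix.diagonal_apply]
  refine ⟨AffineMap.mk' (fun p ↦ L (p -ᵥ C) +ᵥ C) L C (by simp), by simp, ?_, ?_, ?_⟩
  · simpa [b, lineMap_apply] using congrArg (· +ᵥ C) (hL 0)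
  · simpa [b, lineMap_apply] using congrArg (· +ᵥ C) (hL 1)
  · simp [L, LinearMap.det_toLin, Matrix.det_diagonal]

section AddHaar

variable {E : Type*} [NormedAddCommGroup E] [NormedSpace ℝ E] [MeasurableSpace E] [BorelSpace E]
  [FiniteDimensional ℝ E] (μ : Measure E) [μ.IsAddHaarMeasure]

theorem MeasureTheory.Measure.addHaar_image_affineMap (f : E →ᵃ[ℝ] E) (s : Set E) :
    μ (f '' s) = ENNReal.ofReal |LinearMap.det f.linear| * μ s := by
  have hf : ⇑f = (f 0 +ᵥ ·) ∘ f.linear := by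
    ext x
    exact (congrFun f.decomp x).trans (add_comm _ _)
  rw [hf, Set.image_comp, Set.image_vadd, measure_vadd, Measure.addHaar_image_linearMap]

theorem MeasureTheory.Measure.addHaar_convexHull_lineMap_lineMap (hE : finrank ℝ E = 2)
    {A B C : E} (h : ¬Collinear ℝ {A, B, C}) (s t : ℝ) :
    μ (convexHull ℝ {C, lineMap C B s, lineMap C A t}) =
      ENNReal.ofReal |s * t| * μ (convexHull ℝ {A, B, C}) := by
  obtain ⟨f, hC, hB, hA, hdet⟩ := exists_affineMap_lineMap_lineMap_det hE h s t
  rw [← hdet, ← μ.addHaar_image_affineMap, f.image_convexHull]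
  simp only [Set.image_insert_eq, Set.image_singleton, hA, hB, hC]
  congr 2
  ext
  simp only [Set.mem_insert_iff, Set.mem_singleton_iff]
  tauto

end AddHaar

/-- Mohr, *Euclides Danicus*, Second Part, Proposition 12: if `E` lies on segment `CB`
and `K` on segment `CA` with `CE · CK = (CB · CA)/2`, then the triangle `CEK` has half
the area of triangle `ABC`; and if moreover `CE + CK` equals half the perimeter of
`ABC`, then `EB + BA + AK = KC + CE`, so the segment `EK` divides both the area and
the perimeter into two equal parts. -/
theorem mohr_II_prop12_bisecting_line (A B C E K : EuclideanSpace ℝ (Fin 2))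
    (hABC : ¬ Collinear ℝ ({A, B, C} : Set (EuclideanSpace ℝ (Fin 2))))
    (hE : E ∈ segment ℝ C B) (hK : K ∈ segment ℝ C A)
    (hprod : dist C E * dist C K = dist C B * dist C A / 2) :
    volume (convexHull ℝ ({C, E, K} : Set (EuclideanSpace ℝ (Fin 2)))) =
        volume (convexHull ℝ ({A, B, C} : Set (EuclideanSpace ℝ (Fin 2)))) / 2 ∧
      (dist C E + dist C K = (dist A B + dist B C + dist C A) / 2 →
        dist E B + dist B A + dist A K = dist K C + dist C E) := by
  have hEB : dist C E + dist E B = dist C B := dist_add_dist_of_mem_segment hE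
  have hKA : dist C K + dist K A = dist C A := dist_add_dist_of_mem_segment hK
  refine ⟨?_, fun _ ↦ by linarith [dist_comm A B, dist_comm B C, dist_comm K C, dist_comm A K]⟩
  rw [segment_eq_image_lineMap] at hE hK
  obtain ⟨s, hs, rfl⟩ := hE
  obtain ⟨t, ht, rfl⟩ := hK
  have hsides : 0 < dist C B * dist C A := mul_pos
    (dist_pos.2 (ne₂₃_of_not_collinear hABC).symm) (dist_pos.2 (ne₁₃_of_not_collinear hABC).symm)
  have hst : s * t = 1 / 2 := by
    rw [dist_left_lineMap, dist_left_lineMap, Real.norm_of_nonneg hs.1,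
      Real.norm_of_nonneg ht.1] at hprod
    exact mul_right_cancel₀ hsides.ne' (by linarith)
  rw [volume.addHaar_convexHull_lineMap_lineMap finrank_euclideanSpace_fin hABC, hst,
    abs_of_pos one_half_pos, ENNReal.ofReal_div_of_pos two_pos]
  simp [ENNReal.div_eq_inv_mul]
end

section
/- Let A ≠ B be points of the plane, d = dist A B, E the midpoint of A and B, and ρ ≥ 4 a real number. Let F be a point with ⟨F − E, B − A⟩ = 0 and dist E F = ρ·d/8. Then for every point G with dist F G = √((ρ·d/8)² − (d/2)²), one has (dist A G)² + (dist B G)² = ρ · (area of triangle A G B). -/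
/-! With `u = B - A`, `f = F - E` and `g = G - E`, Apollonius' theorem and the circle condition
give `GA² + GB² = 2‖g‖² + d²/2 = 4⟪f, g⟫`, while the area of `AGB` is `|ω u g| / 2` for the area
form `ω` of the plane. As `f ⊥ u`, the two-dimensional Lagrange identity
`ω u f * ω u g = ‖u‖² ⟪f, g⟫` and `|ω u f| = ‖u‖ ‖f‖` give `‖f‖ |ω u g| = ‖u‖ |⟪f, g⟫|`, that is
`ρ |ω u g| = 8 ⟪f, g⟫`.
The area formula comes from mapping the unit triangle, whose area `1/2` is an integral, linearly
onto the triangle: the determinant of that map is `ω (b - a) (c - a)`. -/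

open scoped RealInnerProductSpace Pointwise
open MeasureTheory Module Set

theorem convexHull_standard_triangle_eq :
    convexHull ℝ {(0, 0), (1, 0), (0, 1)} = {p : ℝ × ℝ | 0 ≤ p.1 ∧ 0 ≤ p.2 ∧ p.1 + p.2 ≤ 1} := by
  refine (convexHull_min ?_ ?_).antisymm fun p ⟨h1, h2, h12⟩ => ?_
  · rintro _ (rfl | rfl | rfl) <;> norm_num
  · rintro x ⟨hx1, hx2, hx12⟩ y ⟨hy1, hy2, hy12⟩ a c ha hc hac
    simp only [mem_ofPred_eq, Prod.fst_add, Prod.snd_add, Prod.smul_fst, Prod.smul_snd,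
      smul_eq_mul]
    refine ⟨by positivity, by positivity, ?_⟩
    nlinarith
  · have := (convex_convexHull ℝ ({(0, 0), (1, 0), (0, 1)} : Set (ℝ × ℝ))).sum_mem
      (t := Finset.univ) (w := ![1 - p.1 - p.2, p.1, p.2]) (z := ![(0, 0), (1, 0), (0, 1)])
      (fun i _ => by fin_cases i <;> dsimp <;> linarith) (by rw [Fin.sum_univ_three]; dsimp; ring)
      (fun i _ => by fin_cases i <;> apply subset_convexHull <;> simp)
    simpa [Fin.sum_univ_three] using this

theorem volume_convexHull_standard_triangle :
    volume (convexHull ℝ {(0, 0), (1, 0), (0, 1)} : Set (ℝ × ℝ)) = ENNReal.ofReal (1 / 2) := by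
  set T := {p : ℝ × ℝ | 0 ≤ p.1 ∧ 0 ≤ p.2 ∧ p.1 + p.2 ≤ 1}
  have hslice (x : ℝ) :
      volume (Prod.mk x ⁻¹' T) = (Icc 0 1).indicator (fun x => ENNReal.ofReal (1 - x)) x := by
    by_cases hx : x ∈ Icc (0 : ℝ) 1
    · have : Prod.mk x ⁻¹' T = Icc 0 (1 - x) := by
        ext y
        simp only [T, mem_preimage, mem_ofPred_eq, mem_Icc, hx.1, true_and, le_sub_iff_add_le']
      rw [this, Real.volume_Icc, indicator_of_mem hx, sub_zero]
    · have : Prod.mk x ⁻¹' T = ∅ := by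
        simp only [mem_Icc, not_and_or, not_le] at hx
        ext y
        simp only [T, mem_preimage, mem_ofPred_eq, mem_empty_iff_false, iff_false]
        rintro ⟨h0, h1, h2⟩
        rcases hx with hx | hx <;> linarith
      rw [this, measure_empty, indicator_of_notMem hx]
  have hT : MeasurableSet T := by measurability
  rw [convexHull_standard_triangle_eq, Measure.volume_eq_prod, Measure.prod_apply hT]
  simp_rw [hslice]
  rw [lintegral_indicator measurableSet_Icc, ← ofReal_integral_eq_lintegral_ofReal,
    integral_Icc_eq_integral_Ioc, ← intervalIntegral.integral_of_le zero_le_one,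
    intervalIntegral.integral_sub intervalIntegrable_const intervalIntegral.intervalIntegrable_id]
  · norm_num
  · exact (continuous_const.sub continuous_id).integrableOn_Icc
  · filter_upwards [ae_restrict_mem measurableSet_Icc] with x hx
    exact sub_nonneg.mpr hx.2

section OrientedPlane

variable {E : Type*} [NormedAddCommGroup E] [InnerProductSpace ℝ E]

theorem OrthonormalBasis.volume_convexHull_zero_basis [FiniteDimensional ℝ E]
    [MeasurableSpace E] [BorelSpace E] (b : OrthonormalBasis (Fin 2) ℝ E) :
    volume (convexHull ℝ {0, b 0, b 1}) = ENNReal.ofReal (1 / 2) := by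
  let φ : E ≃ₗ[ℝ] ℝ × ℝ := b.repr.toLinearEquiv.trans
    ((WithLp.linearEquiv 2 ℝ (Fin 2 → ℝ)).trans (LinearEquiv.finTwoArrow ℝ ℝ))
  have hφ : MeasurePreserving φ := (measurePreserving_finTwoArrow volume).comp
    ((PiLp.volume_preserving_ofLp (Fin 2)).comp b.measurePreserving_repr)
  have hhull : φ '' convexHull ℝ {0, b 0, b 1} = convexHull ℝ {(0, 0), (1, 0), (0, 1)} := by
    rw [← LinearEquiv.coe_coe, LinearMap.image_convexHull]
    simp [image_insert_eq, φ]
  rw [← preimage_image_eq (convexHull ℝ _) φ.injective, hhull,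
    hφ.measure_preimage ((convex_convexHull ℝ _).nullMeasurableSet (μ := volume)),
    volume_convexHull_standard_triangle]

attribute [local instance] FiniteDimensional.of_fact_finrank_eq_two

variable [Fact (finrank ℝ E = 2)] (o : Orientation ℝ E (Fin 2))

theorem Orientation.norm_mul_abs_areaForm_of_inner_eq_zero {u f : E} (h : ⟪u, f⟫ = 0) (g : E) :
    ‖f‖ * |o.areaForm u g| = ‖u‖ * |⟪f, g⟫| := by
  rcases eq_or_ne u 0 with rfl | hu
  · simp
  have hf : |o.areaForm u f| = ‖u‖ * ‖f‖ := by
    rw [← sq_eq_sq₀ (abs_nonneg _) (by positivity), sq_abs, mul_pow,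
      ← o.inner_sq_add_areaForm_sq, h]
    ring
  have hfg : o.areaForm u f * o.areaForm u g = ‖u‖ ^ 2 * ⟪f, g⟫ := by
    linear_combination o.inner_mul_inner_add_areaForm_mul_areaForm u f g - ⟪u, g⟫ * h
  have habs := congrArg abs hfg
  rw [abs_mul, abs_mul, hf, abs_of_nonneg (by positivity : 0 ≤ ‖u‖ ^ 2)] at habs
  have hu' : 0 < ‖u‖ := norm_pos_iff.mpr hu
  exact mul_left_cancel₀ hu'.ne' (by linear_combination habs)

variable [MeasurableSpace E] [BorelSpace E]

theorem Orientation.volume_convexHull_zero (u v : E) :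
    volume (convexHull ℝ {0, u, v}) = ENNReal.ofReal (|o.areaForm u v| / 2) := by
  set b := o.finOrthonormalBasis two_pos Fact.out
  let L := b.toBasis.constr ℝ ![u, v]
  have hdet : LinearMap.det L = o.areaForm u v := by
    rw [o.areaForm_to_volumeForm, o.volumeForm_robust b (o.finOrthonormalBasis_orientation _ _),
      Basis.det_apply, Basis.toMatrix_eq_toMatrix_constr, LinearMap.det_toMatrix]
    rfl
  have himage : L '' convexHull ℝ {0, b 0, b 1} = convexHull ℝ {0, u, v} := by
    rw [LinearMap.image_convexHull]
    simp [image_insert_eq, L]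
  rw [← himage, Measure.addHaar_image_linearMap, hdet, b.volume_convexHull_zero_basis,
    ← ENNReal.ofReal_mul (abs_nonneg _)]
  ring_nf

theorem Orientation.volume_convexHull_triangle (a b c : E) :
    volume (convexHull ℝ {a, b, c}) = ENNReal.ofReal (|o.areaForm (b - a) (c - a)| / 2) := by
  have : ({a, b, c} : Set E) = a +ᵥ ({0, b - a, c - a} : Set E) := by
    simp [vadd_set_insert]
  rw [this, convexHull_vadd, measure_vadd, o.volume_convexHull_zero]

end OrientedPlane

/-- Mohr, *Euclides Danicus*, Second Part, Proposition 16: given `A ≠ B` with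
`d = dist A B`, a ratio `ρ ≥ 4`, and `F` on the perpendicular bisector of `AB` at
distance `ρ·d/8` from the midpoint `E`, every point `G` of the circle of center `F`
and radius `√((ρ·d/8)² − (d/2)²)` satisfies `GA² + GB² = ρ · area(AGB)`. -/
theorem mohr_II_prop16_locus (A B E F : EuclideanSpace ℝ (Fin 2)) (d ρ : ℝ)
    (hAB : A ≠ B) (hd : d = dist A B) (hρ : 4 ≤ ρ)
    (hE : E = midpoint ℝ A B)
    (hFperp : ⟪F - E, B - A⟫ = 0) (hEF : dist E F = ρ * d / 8) :
    ∀ G : EuclideanSpace ℝ (Fin 2),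
      dist F G = Real.sqrt ((ρ * d / 8) ^ 2 - (d / 2) ^ 2) →
        (dist A G) ^ 2 + (dist B G) ^ 2 =
          ρ * (volume (convexHull ℝ ({A, G, B} : Set (EuclideanSpace ℝ (Fin 2))))).toReal := by
  intro G hG
  have : Fact (finrank ℝ (EuclideanSpace ℝ (Fin 2)) = 2) := ⟨finrank_euclideanSpace_fin⟩
  let o : Orientation ℝ (EuclideanSpace ℝ (Fin 2)) (Fin 2) :=
    (EuclideanSpace.basisFun (Fin 2) ℝ).toBasis.orientation
  have hd0 : 0 < d := hd ▸ dist_pos.mpr hAB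
  have hu : ‖B - A‖ = d := by rw [hd, dist_comm, dist_eq_norm]
  have hf : ‖F - E‖ = ρ * d / 8 := by rw [← hEF, dist_comm, dist_eq_norm]
  have hcircle : ‖(G - E) - (F - E)‖ ^ 2 = (ρ * d / 8) ^ 2 - (d / 2) ^ 2 := by
    rw [sub_sub_sub_cancel_right, ← dist_eq_norm, dist_comm, hG, Real.sq_sqrt]
    nlinarith [mul_nonneg (sq_nonneg d) (by nlinarith : (0 : ℝ) ≤ ρ ^ 2 - 16)]
  have hsum : dist A G ^ 2 + dist B G ^ 2 = 4 * ⟪F - E, G - E⟫ := by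
    rw [dist_comm A, dist_comm B,
      EuclideanGeometry.dist_sq_add_dist_sq_eq_two_mul_dist_midpoint_sq_add_half_dist_sq, ← hE,
      ← hd, dist_eq_norm]
    rw [norm_sub_sq_real, hf, real_inner_comm] at hcircle
    linear_combination 2 * hcircle
  have harea : (volume (convexHull ℝ {A, G, B})).toReal = |o.areaForm (B - A) (G - E)| / 2 := by
    have hGA : G - A = (G - E) + (1 / 2 : ℝ) • (B - A) := by
      rw [hE, midpoint_eq_smul_add, invOf_eq_inv]
      module
    rw [o.volume_convexHull_triangle, ENNReal.toReal_ofReal (by positivity), hGA, map_add,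
      map_smul, LinearMap.add_apply, LinearMap.smul_apply, o.areaForm_apply_self, smul_zero,
      add_zero, o.areaForm_swap, abs_neg]
  have hinner : 0 ≤ ⟪F - E, G - E⟫ := by nlinarith [sq_nonneg (dist A G), sq_nonneg (dist B G)]
  have key := o.norm_mul_abs_areaForm_of_inner_eq_zero
    (by rwa [real_inner_comm] : ⟪B - A, F - E⟫ = 0) (G - E)
  rw [hu, hf, abs_of_nonneg hinner] at key
  have hratio : ρ * |o.areaForm (B - A) (G - E)| = 8 * ⟪F - E, G - E⟫ :=
    mul_left_cancel₀ hd0.ne' (by linear_combination 8 * key)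
  rw [hsum, harea]
  linear_combination -hratio / 2
end

section
/- Let E, K be points of the plane and R > k > 0 with dist E K + k ≤ R (so the closed disc of center K and radius k is contained in the closed disc of center E and radius R). Then the centroid of the region obtained by removing the smaller disc from the larger one is M = E + (k²/(R² − k²)) · (E − K); that is, ∫ x over (closedBall E R \ closedBall K k) with respect to two-dimensional Lebesgue measure equals π(R² − k²) · M. -/
/-!
A disc is symmetric about its center, so by the translation and negation invariance of Lebesgue
measure its moment `∫ x` is its area times its center. The moment of the region is therefore the
difference `π R² • E - π k² • K` of the moments of the two discs.
-/

open MeasureTheory Metric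

section Moment

variable {E : Type*} [NormedAddCommGroup E] [MeasurableSpace E] {μ : Measure E}

theorem integrableOn_id_closedBall [BorelSpace E] [ProperSpace E] [IsFiniteMeasureOnCompacts μ]
    (c : E) (r : ℝ) : IntegrableOn (fun x => x) (closedBall c r) μ :=
  continuous_id'.continuousOn.integrableOn_compact (isCompact_closedBall c r)

variable [NormedSpace ℝ E]

theorem setIntegral_id_eq_zero_of_neg_eq [MeasurableNeg E] [μ.IsNegInvariant] {s : Set E}
    (hs : -s = s) : ∫ x in s, x ∂μ = 0 := by
  have h := (Measure.measurePreserving_neg μ).setIntegral_preimage_emb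
    (MeasurableEquiv.neg E).measurableEmbedding (fun x => x) s
  rw [Set.neg_preimage, hs, integral_neg] at h
  linear_combination (norm := module) (-(1 / 2 : ℝ)) • h

theorem setIntegral_id_closedBall [BorelSpace E] [ProperSpace E] [IsFiniteMeasureOnCompacts μ]
    [μ.IsAddLeftInvariant] [μ.IsNegInvariant] (c : E) (r : ℝ) :
    ∫ x in closedBall c r, x ∂μ = μ.real (closedBall c r) • c := by
  have hcentered : ∫ x in closedBall c r, (x - c) ∂μ = 0 := by
    have h := (measurePreserving_add_left μ c).setIntegral_preimage_emb
      (MeasurableEquiv.addLeft c).measurableEmbedding (fun x => x - c) (closedBall c r)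
    simp only [preimage_add_closedBall, sub_self, add_sub_cancel_left] at h
    rw [← h]
    exact setIntegral_id_eq_zero_of_neg_eq (by simp)
  rwa [integral_sub (integrableOn_id_closedBall c r)
    (integrableOn_const measure_closedBall_lt_top.ne), setIntegral_const, sub_eq_zero] at hcentered

end Moment

theorem EuclideanSpace.volume_real_closedBall_fin_two (x : EuclideanSpace ℝ (Fin 2)) {r : ℝ}
    (hr : 0 ≤ r) : volume.real (closedBall x r) = Real.pi * r ^ 2 := by
  rw [measureReal_def, EuclideanSpace.volume_closedBall_fin_two, ENNReal.toReal_mul,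
    ENNReal.toReal_pow, ENNReal.toReal_ofReal hr, ENNReal.toReal_ofReal Real.pi_pos.le, mul_comm]

/-- Mohr, *Euclides Danicus*, Second Part, Proposition 17: the center of gravity of
the region obtained by removing the disc of center `K` and radius `k` from the disc
of center `E` and radius `R` containing it is the point
`M = E + (k²/(R² − k²)) • (E − K)`: the integral of the identity over the region
(whose measure is `π(R² − k²)`) equals `π(R² − k²) • M`. -/
theorem mohr_II_prop17_centroid (E K : EuclideanSpace ℝ (Fin 2)) (R k : ℝ)
    (hk : 0 < k) (hkR : k < R) (hsub : dist E K + k ≤ R) :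
    ∫ x in (Metric.closedBall E R \ Metric.closedBall K k), x =
      (Real.pi * (R ^ 2 - k ^ 2)) • (E + (k ^ 2 / (R ^ 2 - k ^ 2)) • (E - K)) := by
  have hsubset : closedBall K k ⊆ closedBall E R :=
    closedBall_subset_closedBall' (by rw [dist_comm]; linarith)
  rw [setIntegral_sdiff measurableSet_closedBall (integrableOn_id_closedBall E R) hsubset,
    setIntegral_id_closedBall, setIntegral_id_closedBall,
    EuclideanSpace.volume_real_closedBall_fin_two E (by linarith),
    EuclideanSpace.volume_real_closedBall_fin_two K hk.le]
  have hne : R ^ 2 - k ^ 2 ≠ 0 := by nlinarith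
  rw [smul_add, smul_smul, mul_assoc, mul_div_cancel₀ _ hne]
  module
end

section
/- Perspective projection of a floor point (correctness of Mohr's construction): in ℝ³, let the glass be the plane Π = {p : p₂ = 0}, let the eye be at O = (0, −w, h) with w > 0, h > 0, and let A = (a₁, a₂, 0) be a point of the floor with a₂ > 0. Then the line through O and A meets Π in exactly one point, namely I = (a₁·w/(w + a₂), 0, h·a₂/(w + a₂)); in particular the height of the image above the ground line is h·a₂/(w + a₂), i.e. 'as SW plus AG is to AG, so SH is to HI'. -/
/-! Along the line `t ↦ O + t • (A - O)` the depth coordinate is `-w + t (w + a₂)`, which changes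
at a nonzero rate and vanishes exactly at `t = w / (w + a₂)`; the other two coordinates at that
parameter are those of `I`. -/

open AffineMap

theorem affineSpan_pair_inter_preimage_eq_singleton {k V P : Type*} [Field k] [AddCommGroup V]
    [Module k V] [AddTorsor V P] (f : P →ᵃ[k] k) {p q : P} (hpq : f p ≠ f q) (c : k) :
    (line[k, p, q] : Set P) ∩ f ⁻¹' {c} = {lineMap p q ((c - f p) / (f q - f p))} := by
  have hne : f q - f p ≠ 0 := sub_ne_zero.mpr hpq.symm
  have hf (r : k) : f (lineMap p q r) = r * (f q - f p) + f p := by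
    rw [apply_lineMap, lineMap_apply_ring']
  ext x
  simp only [Set.mem_inter_iff, SetLike.mem_coe, mem_affineSpan_pair_iff_exists_lineMap_eq,
    Set.mem_preimage, Set.mem_singleton_iff]
  constructor
  · rintro ⟨⟨r, rfl⟩, hr⟩
    rw [hf] at hr
    rw [← hr, add_sub_cancel_right, mul_div_cancel_right₀ _ hne]
  · rintro rfl
    refine ⟨⟨_, rfl⟩, ?_⟩
    rw [hf, div_mul_cancel₀ _ hne, sub_add_cancel]

theorem mohr_II_prop19_perspective_general (O A I : EuclideanSpace ℝ (Fin 3))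
    (w h a₁ a₂ : ℝ) (hw : 0 < w) (ha₂ : 0 < a₂)
    (hO : O 0 = 0 ∧ O 1 = -w ∧ O 2 = h)
    (hA : A 0 = a₁ ∧ A 1 = a₂ ∧ A 2 = 0)
    (hI : I 0 = a₁ * w / (w + a₂) ∧ I 1 = 0 ∧ I 2 = h * a₂ / (w + a₂)) :
    (affineSpan ℝ ({O, A} : Set (EuclideanSpace ℝ (Fin 3))) : Set (EuclideanSpace ℝ (Fin 3)))
        ∩ {p : EuclideanSpace ℝ (Fin 3) | p 1 = 0} = {I} := by
  obtain ⟨hO0, hO1, hO2⟩ := hO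
  obtain ⟨hA0, hA1, hA2⟩ := hA
  obtain ⟨hI0, hI1, hI2⟩ := hI
  have hwa : w + a₂ ≠ 0 := by positivity
  let depth := (EuclideanSpace.proj 1 : EuclideanSpace ℝ (Fin 3) →L[ℝ] ℝ).toAffineMap
  have hOA : depth O ≠ depth A := by
    change O 1 ≠ A 1
    linarith
  have hI_eq : lineMap O A ((0 - depth O) / (depth A - depth O)) = I := by
    change lineMap O A ((0 - O 1) / (A 1 - O 1)) = I
    ext i
    fin_cases i <;> simp [lineMap_apply_module, hO0, hO1, hO2, hA0, hA1, hA2, hI0, hI1, hI2] <;>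
      field_simp <;> ring
  rw [← hI_eq, ← affineSpan_pair_inter_preimage_eq_singleton depth hOA 0]
  rfl

/-- Mohr, *Euclides Danicus*, Second Part, Proposition 19 (perspective projection of a
floor point): in ℝ³ with coordinates (along the ground line, horizontal distance from
the glass plane, height), let the glass be the plane `p 1 = 0`, the eye at
`O = (0, −w, h)` with `w, h > 0`, and `A = (a₁, a₂, 0)` a floor point with `a₂ > 0`.
Then the line through `O` and `A` meets the glass plane in exactly one point, namely
`I = (a₁·w/(w + a₂), 0, h·a₂/(w + a₂))`; in particular the height of the image is
`h·a₂/(w + a₂)`: "as SW plus AG is to AG, so SH is to HI". -/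
theorem mohr_II_prop19_perspective (O A I : EuclideanSpace ℝ (Fin 3))
    (w h a₁ a₂ : ℝ) (hw : 0 < w) (hh : 0 < h) (ha₂ : 0 < a₂)
    (hO : O 0 = 0 ∧ O 1 = -w ∧ O 2 = h)
    (hA : A 0 = a₁ ∧ A 1 = a₂ ∧ A 2 = 0)
    (hI : I 0 = a₁ * w / (w + a₂) ∧ I 1 = 0 ∧ I 2 = h * a₂ / (w + a₂)) :
    (affineSpan ℝ ({O, A} : Set (EuclideanSpace ℝ (Fin 3))) : Set (EuclideanSpace ℝ (Fin 3)))
        ∩ {p : EuclideanSpace ℝ (Fin 3) | p 1 = 0} = {I} :=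
  mohr_II_prop19_perspective_general O A I w h a₁ a₂ hw ha₂ hO hA hI
end
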